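/- arXiv:math/0612305 — 9 statements merged into one kernel-verified Lean document; each statement's English description precedes it below -/
import Mathlib

section
/- Let K be a nontrivially normed field which is locally compact and whose norm is ultrametric (satisfies ‖x+y‖ ≤ max(‖x‖,‖y‖)), and assume ‖(2:K)‖ = 1 (i.e., K is a non-archimedean local field of residual characteristic not 2). Then for every n and every symmetric n×n matrix B over K whose determinant is a unit, there exists an invertible n×n matrix M over K, all of whose entries and all of whose inverse's entries have norm at most 1, such that Mᵀ·B·M is a diagonal matrix. -/
/-!
Gaussian elimination with pivots of maximal norm. Let `m` be the largest norm of an entry in the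
part of `B` that is not yet diagonal. If some diagonal entry there has norm `m`, it dominates its
row, so its row and column can be cleared with multipliers of norm `≤ 1`. Otherwise `m = ‖B i j‖`
with `i ≠ j`, and the base change `e_i ↦ e_i + e_j` produces the new diagonal entry
`B i i + B j j + 2 B i j`, of norm `‖2 B i j‖ = m` by the ultrametric inequality and `‖2‖ = 1`.
Each base change is `1 + N` with `N` integral and `N * N = 0`, hence integral with integral
inverse `1 - N`; it leaves the rows and columns that are already diagonal alone, so one can
induct on the set of indices whose rows may still have off-diagonal entries.
-/

open Matrix

section UnitClosedBall

variable (K : Type*) [SeminormedRing K] [NormOneClass K] [IsUltrametricDist K]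

def Subring.unitClosedBall : Subring K where
  toSubmonoid := Submonoid.unitClosedBall K
  add_mem' {x y} hx hy := by
    simp only [Submonoid.mem_carrier, Submonoid.mem_unitClosedBall] at hx hy ⊢
    exact (IsUltrametricDist.norm_add_le_max x y).trans (max_le hx hy)
  zero_mem' := by simp
  neg_mem' {x} hx := by simpa using hx

@[simp]
lemma Subring.mem_unitClosedBall {x : K} : x ∈ Subring.unitClosedBall K ↔ ‖x‖ ≤ 1 :=
  Submonoid.mem_unitClosedBall K

end UnitClosedBall

lemma Subring.exists_mem_units_val_eq_one_add {R : Type*} [Ring R] (S : Subring R) {N : R}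
    (hN : N ∈ S) (hNN : N * N = 0) : ∃ U ∈ S.toSubmonoid.units, (U : R) = 1 + N :=
  ⟨⟨1 + N, 1 - N, by simp [mul_sub, add_mul, hNN], by simp [sub_mul, mul_add, hNN]⟩,
    ⟨add_mem (one_mem S) hN, sub_mem (one_mem S) hN⟩, rfl⟩

namespace Matrix

variable {ι α : Type*}

def IsDiagOutside [Zero α] (t : Finset ι) (B : Matrix ι ι α) : Prop :=
  ∀ a ∉ t, ∀ b, a ≠ b → B a b = 0

def IsSupportedIn [Zero α] (t : Finset ι) (N : Matrix ι ι α) : Prop :=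
  ∀ a b, N a b ≠ 0 → a ∈ t ∧ b ∈ t

lemma IsDiagOutside.erase [Zero α] [DecidableEq ι] {t : Finset ι} {B : Matrix ι ι α}
    (hB : B.IsDiagOutside t) {i : ι} (hi : ∀ b, i ≠ b → B i b = 0) :
    B.IsDiagOutside (t.erase i) := by
  intro a ha b hab
  by_cases hai : a = i
  · exact hai ▸ hi b (hai ▸ hab)
  · exact hB a (fun h => ha (Finset.mem_erase.2 ⟨hai, h⟩)) b hab

lemma IsSymm.transpose_mul_mul [Fintype ι] [CommSemiring α] {B : Matrix ι ι α} (hB : B.IsSymm)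
    {κ : Type*} (P : Matrix ι κ α) : (Pᵀ * B * P).IsSymm := by
  rw [IsSymm, transpose_mul, transpose_mul, transpose_transpose, hB.eq, Matrix.mul_assoc]

variable [Fintype ι] [DecidableEq ι] [Semiring α] {t : Finset ι} {B N : Matrix ι ι α}

lemma transpose_one_add_mul_mul_one_add_apply_of_notMem
    (hNt : N.IsSupportedIn t) (hB : B.IsDiagOutside t) {a : ι} (ha : a ∉ t)
    (b : ι) : ((1 + N)ᵀ * B * (1 + N) : Matrix ι ι _) a b = B a b := by
  have hNa : ∀ c, N a c = 0 ∧ N c a = 0 := fun c =>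
    ⟨by_contra fun h => ha (hNt a c h).1, by_contra fun h => ha (hNt c a h).2⟩
  have hBN : (B * N) a b = 0 := by
    rw [mul_apply, Finset.sum_eq_single a (fun d _ hd => by rw [hB a ha d hd.symm, zero_mul])
      (by simp), (hNa b).1, mul_zero]
  have hNX : ∀ X : Matrix ι ι α, (Nᵀ * X) a b = 0 := fun X => by
    rw [mul_apply]
    exact Finset.sum_eq_zero fun c _ => by rw [transpose_apply, (hNa c).2, zero_mul]
  rw [Matrix.mul_assoc, transpose_add, transpose_one, Matrix.add_mul, Matrix.one_mul,
    Matrix.add_apply, hNX, add_zero, Matrix.mul_add, Matrix.mul_one, Matrix.add_apply, hBN,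
    add_zero]

lemma IsDiagOutside.transpose_one_add_mul_mul_one_add (hB : B.IsDiagOutside t)
    (hNt : N.IsSupportedIn t) :
    ((1 + N)ᵀ * B * (1 + N)).IsDiagOutside t := fun a ha b hab => by
  rw [transpose_one_add_mul_mul_one_add_apply_of_notMem hNt hB ha]
  exact hB a ha b hab

end Matrix

section Ultrametric

variable {ι K : Type*} [Fintype ι] [DecidableEq ι] [NormedField K] [IsUltrametricDist K]

local notation "𝒪" => Subring.unitClosedBall K

def Matrix.IsPivot (B : Matrix ι ι K) (i : ι) : Prop :=
  B i i ≠ 0 ∧ ∀ b, ‖B i b‖ ≤ ‖B i i‖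

/-- `GL_ι(𝒪)`, the group of base changes of `ι → K` preserving the sup norm. -/
abbrev integralGL (ι K : Type*) [Fintype ι] [DecidableEq ι] [NormedField K]
    [IsUltrametricDist K] : Subgroup (Matrix ι ι K)ˣ :=
  ((Subring.unitClosedBall K).matrix (n := ι)).toSubmonoid.units

variable {t : Finset ι} {B N : Matrix ι ι K}

lemma norm_transpose_one_add_mul_mul_one_add_apply_le (hN : N ∈ (𝒪).matrix)
    (hNt : N.IsSupportedIn t) {m : ℝ} (hB : ∀ a ∈ t, ∀ b, ‖B a b‖ ≤ m)
    {a : ι} (ha : a ∈ t) (b : ι) : ‖((1 + N)ᵀ * B * (1 + N) : Matrix ι ι _) a b‖ ≤ m := by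
  have hm : 0 ≤ m := (norm_nonneg _).trans (hB a ha b)
  have hP : ∀ c d, ‖(1 + N) c d‖ ≤ 1 := fun c d =>
    (Subring.mem_unitClosedBall K).1 (add_mem (one_mem _) hN c d)
  have hBP : ∀ c ∈ t, ‖(B * (1 + N)) c b‖ ≤ m := fun c hc =>
    IsUltrametricDist.norm_sum_le_of_forall_le_of_nonneg hm fun d _ => by
      rw [norm_mul]
      exact mul_le_of_le_one_right (norm_nonneg _) (hP d b) |>.trans (hB c hc d)
  rw [Matrix.mul_assoc, mul_apply]
  refine IsUltrametricDist.norm_sum_le_of_forall_le_of_nonneg hm fun c _ => ?_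
  by_cases hc : c ∈ t
  · rw [norm_mul]
    exact mul_le_of_le_one_left (norm_nonneg _) (hP c a) |>.trans (hBP c hc)
  · have hca : (1 + N) c a = 0 := by
      rw [Matrix.add_apply, one_apply_ne (ne_of_mem_of_not_mem ha hc).symm, zero_add]
      exact by_contra fun h => hc (hNt c a h).1
    rw [transpose_apply, hca, zero_mul, norm_zero]
    exact hm

lemma exists_pivot (h2 : ‖(2 : K)‖ = 1) (hB : B.IsSymm) (hBt : B.IsDiagOutside t)
    (hBd : ¬B.IsDiag) :
    ∃ N ∈ (𝒪).matrix, N * N = 0 ∧ N.IsSupportedIn t ∧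
      ∃ i ∈ t, ((1 + N)ᵀ * B * (1 + N)).IsPivot i := by
  obtain ⟨a, b, hab, hBab⟩ : ∃ a b, a ≠ b ∧ B a b ≠ 0 := by simpa [IsDiag, Pairwise] using hBd
  have hmem : ∀ a b, a ≠ b → B a b ≠ 0 → a ∈ t := fun a b hab h =>
    by_contra fun ha => h (hBt a ha b hab)
  have hab_mem : (a, b) ∈ t ×ˢ t :=
    Finset.mem_product.2 ⟨hmem a b hab hBab, hmem b a hab.symm (by rwa [hB.apply])⟩
  obtain ⟨⟨i, j⟩, hij, hmax⟩ := (t ×ˢ t).exists_max_image (fun p => ‖B p.1 p.2‖) ⟨_, hab_mem⟩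
  obtain ⟨hi, hj⟩ := Finset.mem_product.1 hij
  set m := ‖B i j‖
  have hm : 0 < m := (norm_pos_iff.2 hBab).trans_le (hmax _ hab_mem)
  have hrow : ∀ a ∈ t, ∀ b, ‖B a b‖ ≤ m := fun a ha b => by
    by_cases hb : b ∈ t
    · exact hmax (a, b) (Finset.mem_product.2 ⟨ha, hb⟩)
    · rw [← hB.apply, hBt b hb a (ne_of_mem_of_not_mem ha hb).symm, norm_zero]
      exact hm.le
  by_cases hdiag : ∃ k ∈ t, m ≤ ‖B k k‖
  · obtain ⟨k, hk, hkm⟩ := hdiag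
    refine ⟨0, zero_mem _, zero_mul 0, fun a b h => absurd rfl h, k, hk, ?_⟩
    simp only [add_zero, transpose_one, Matrix.one_mul, Matrix.mul_one]
    exact ⟨norm_pos_iff.1 (hm.trans_le hkm), fun b => (hrow k hk b).trans hkm⟩
  simp only [not_exists, not_and, not_le] at hdiag
  have hji : j ≠ i := by
    rintro rfl
    exact (hdiag j hj).false
  have hN : single j i (1 : K) ∈ (𝒪).matrix := fun a b =>
    (Subring.mem_unitClosedBall K).2 (by rw [single_apply]; split_ifs <;> simp)
  have hNt : (single j i (1 : K)).IsSupportedIn t := fun a b h => by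
    rw [single_apply] at h
    split_ifs at h with hab
    · exact ⟨hab.1 ▸ hj, hab.2 ▸ hi⟩
    · exact absurd rfl h
  have hii : ((1 + single j i 1)ᵀ * B * (1 + single j i 1) : Matrix ι ι K) i i
      = B i i + B j j + 2 * B i j := by
    rw [transpose_add, transpose_one, transpose_single]
    change (transvection i j 1 * B * transvection j i 1 : Matrix ι ι K) i i = _
    rw [mul_transvection_apply_same, transvection_mul_apply_same, transvection_mul_apply_same,
      hB.apply i j]
    ring
  have hnorm : ‖((1 + single j i 1)ᵀ * B * (1 + single j i 1) : Matrix ι ι K) i i‖ = m := by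
    have hlt : ‖B i i + B j j‖ < m :=
      (IsUltrametricDist.norm_add_le_max _ _).trans_lt (max_lt (hdiag i hi) (hdiag j hj))
    have h2m : ‖2 * B i j‖ = m := by rw [norm_mul, h2, one_mul]
    rw [hii, IsUltrametricDist.norm_add_eq_max_of_norm_ne_norm (h2m ▸ hlt.ne), h2m,
      max_eq_right (h2m ▸ hlt.le)]
  refine ⟨single j i 1, hN, single_mul_single_of_ne _ _ _ _ hji.symm _, hNt, i, hi,
    norm_ne_zero_iff.1 (hnorm ▸ hm.ne'), fun b => ?_⟩
  rw [hnorm]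
  exact norm_transpose_one_add_mul_mul_one_add_apply_le hN hNt hrow hi b

lemma exists_clear_pivot_row (hB : B.IsSymm) (hBt : B.IsDiagOutside t) {i : ι} (hi : i ∈ t)
    (hpiv : B.IsPivot i) :
    ∃ N ∈ (𝒪).matrix, N * N = 0 ∧ N.IsSupportedIn t ∧
      ∀ b, i ≠ b → ((1 + N)ᵀ * B * (1 + N) : Matrix ι ι K) i b = 0 := by
  set N : Matrix ι ι K := of fun a b => if a = i ∧ b ≠ i then -(B i b / B i i) else 0 with hNdef
  have hNi : ∀ a, N a i = 0 := fun a => if_neg fun h => h.2 rfl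
  have hN : N ∈ (𝒪).matrix := fun a b => (Subring.mem_unitClosedBall K).2 <| by
    simp only [hNdef, of_apply]
    split_ifs
    · rw [norm_neg, norm_div]
      exact div_le_one_of_le₀ (hpiv.2 b) (norm_nonneg _)
    · simp
  have hNN : N * N = 0 := by
    ext a b
    rw [mul_apply, Matrix.zero_apply]
    refine Finset.sum_eq_zero fun c _ => ?_
    by_cases hc : c = i
    · rw [hc, hNi, zero_mul]
    · rw [show N c b = 0 from if_neg fun h => hc h.1, mul_zero]
  have hNt : N.IsSupportedIn t := fun a b h => by
    simp only [hNdef, of_apply] at h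
    split_ifs at h with hab
    · obtain ⟨rfl, hb⟩ := hab
      refine ⟨hi, by_contra fun hbt => h ?_⟩
      rw [← hB.apply, hBt b hbt a hb, zero_div, neg_zero]
    · exact absurd rfl h
  refine ⟨N, hN, hNN, hNt, fun b hb => ?_⟩
  have hNX : ∀ X : Matrix ι ι K, (Nᵀ * X) i b = 0 := fun X => by
    rw [mul_apply]
    exact Finset.sum_eq_zero fun c _ => by rw [transpose_apply, hNi, zero_mul]
  have hBN : (B * N) i b = -B i b := by
    rw [mul_apply, Finset.sum_eq_single i (fun c _ hc => by rw [show N c b = 0 from if_neg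
      fun h => hc h.1, mul_zero]) (by simp)]
    rw [show N i b = -(B i b / B i i) from if_pos ⟨rfl, hb.symm⟩]
    field_simp [hpiv.1]
  rw [Matrix.mul_assoc, transpose_add, transpose_one, Matrix.add_mul, Matrix.one_mul,
    Matrix.add_apply, hNX, add_zero, Matrix.mul_add, Matrix.mul_one, Matrix.add_apply, hBN,
    add_neg_cancel]

theorem exists_mem_integralGL_isDiag_of_isDiagOutside (h2 : ‖(2 : K)‖ = 1) (hB : B.IsSymm)
    (hBt : B.IsDiagOutside t) : ∃ U ∈ integralGL ι K, ((U : Matrix ι ι K)ᵀ * B * U).IsDiag := by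
  induction t using Finset.strongInduction generalizing B with
  | H t ih =>
  by_cases hBd : B.IsDiag
  · exact ⟨1, one_mem _, by simpa using hBd⟩
  obtain ⟨N, hN, hNN, hNt, i, hi, hpiv⟩ := exists_pivot h2 hB hBt hBd
  set B₁ := (1 + N)ᵀ * B * (1 + N)
  have hB₁t : B₁.IsDiagOutside t := hBt.transpose_one_add_mul_mul_one_add hNt
  obtain ⟨N', hN', hNN', hN't, hrow⟩ :=
    exists_clear_pivot_row (hB.transpose_mul_mul _) hB₁t hi hpiv
  obtain ⟨V, hV, hVd⟩ := ih _ (Finset.erase_ssubset hi)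
    ((hB.transpose_mul_mul _).transpose_mul_mul _)
    ((hB₁t.transpose_one_add_mul_mul_one_add hN't).erase hrow)
  obtain ⟨P, hP, hPN⟩ := Subring.exists_mem_units_val_eq_one_add _ hN hNN
  obtain ⟨R, hR, hRN⟩ := Subring.exists_mem_units_val_eq_one_add _ hN' hNN'
  refine ⟨P * R * V, mul_mem (mul_mem hP hR) hV, ?_⟩
  simpa [hPN, hRN, B₁, Matrix.mul_assoc] using hVd

theorem exists_mem_integralGL_isDiag (h2 : ‖(2 : K)‖ = 1) (hB : B.IsSymm) :
    ∃ U ∈ integralGL ι K, ((U : Matrix ι ι K)ᵀ * B * U).IsDiag :=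
  exists_mem_integralGL_isDiag_of_isDiagOutside h2 hB fun a ha => absurd (Finset.mem_univ a) ha

end Ultrametric

theorem stmt0_general (K : Type*) [NontriviallyNormedField K]
    (hu : ∀ x y : K, ‖x + y‖ ≤ max ‖x‖ ‖y‖) (h2 : ‖(2 : K)‖ = 1)
    (n : ℕ) (B : Matrix (Fin n) (Fin n) K) (hB : B.IsSymm) :
    ∃ M : Matrix (Fin n) (Fin n) K, IsUnit M.det ∧
      (∀ i j, ‖M i j‖ ≤ 1) ∧ (∀ i j, ‖M⁻¹ i j‖ ≤ 1) ∧
      (Mᵀ * B * M).IsDiag := by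
  have : IsUltrametricDist K :=
    IsUltrametricDist.isUltrametricDist_of_forall_norm_add_le_max_norm hu
  obtain ⟨U, ⟨hU, hUinv⟩, hUd⟩ := exists_mem_integralGL_isDiag h2 hB
  refine ⟨U, (isUnit_iff_isUnit_det _).1 U.isUnit,
    fun i j => (Subring.mem_unitClosedBall K).1 (hU i j), fun i j => ?_, hUd⟩
  rw [← coe_units_inv]
  exact (Subring.mem_unitClosedBall K).1 (hUinv i j)

/-- Over a non-archimedean local field of residual characteristic not 2 (modeled as a
nontrivially normed field `K` which is locally compact, whose norm is ultrametric, and with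
`‖(2:K)‖ = 1`), every symmetric matrix with unit determinant can be diagonalized by a base
change preserving the sup norm, i.e. by a matrix all of whose entries and inverse entries
have norm at most 1. -/
theorem stmt0 (K : Type*) [NontriviallyNormedField K] [LocallyCompactSpace K]
    (hu : ∀ x y : K, ‖x + y‖ ≤ max ‖x‖ ‖y‖) (h2 : ‖(2 : K)‖ = 1)
    (n : ℕ) (B : Matrix (Fin n) (Fin n) K) (hB : B.IsSymm) (hBdet : IsUnit B.det) :
    ∃ M : Matrix (Fin n) (Fin n) K, IsUnit M.det ∧
      (∀ i j, ‖M i j‖ ≤ 1) ∧ (∀ i j, ‖M⁻¹ i j‖ ≤ 1) ∧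
      (Mᵀ * B * M).IsDiag :=
  stmt0_general K hu h2 n B hB
end

section
/- Let K be a nontrivially normed field which is locally compact and whose norm is ultrametric, with ‖(2:K)‖ = 1. Let q be a quadratic form on Kⁿ (n ≥ 0) whose associated bilinear form is nondegenerate. Then there exists a K-basis (e_i) of Kⁿ such that: (1) for every x : Fin n → K, ‖∑ i, x i • e i‖ = ‖x‖, where ‖·‖ denotes the sup norm on Kⁿ (so the base change to (e_i) preserves the sup norm); and (2) the basis is orthogonal for q, i.e., the polar form of q vanishes on (e_i, e_j) for all i ≠ j. -/
/-!
Call a family `b` sup-orthonormal when `x ↦ ∑ xᵢ • bᵢ` is an isometry from `Kᵐ` with the sup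
norm. Let `B` be the polar form. Since `‖4‖ = 1`, polarisation `4 B(x,y) = B(x+y,x+y) - B(x-y,x-y)`
and the ultrametric inequality produce, among `eᵢ` and `eᵢ ± eⱼ`, a vector `v` with a coordinate
`vₖ = 1` such that `‖B(v,v)‖` bounds `‖B(x,y)‖` on the unit ball. Replacing `eₖ` by `v`, and then
each other `eⱼ` by `eⱼ - cⱼ v` with `cⱼ = B(eⱼ,v)/B(v,v)` integral, are shears with integral
coefficients, so the family stays sup-orthonormal while the new vectors are `B`-orthogonal to `v`.
Induction on the span of the remaining `m` vectors, which is isometric to `Kᵐ`, finishes the proof.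
-/

theorem norm_fin_insertNth {α : Type*} [SeminormedAddCommGroup α] {m : ℕ} (k : Fin (m + 1))
    (t : α) (x : Fin m → α) : ‖(k.insertNth t x : Fin (m + 1) → α)‖ = max ‖t‖ ‖x‖ := by
  refine le_antisymm ((pi_norm_le_iff_of_nonneg (by positivity)).2 fun i => ?_) (max_le ?_ ?_)
  · cases i using Fin.succAboveCases k with
    | x => simp
    | p j => simpa using (norm_le_pi_norm x j).trans (le_max_right _ _)
  · simpa using norm_le_pi_norm (k.insertNth t x : Fin (m + 1) → α) k
  · refine (pi_norm_le_iff_of_nonneg (norm_nonneg _)).2 fun j => ?_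
    simpa using norm_le_pi_norm (k.insertNth t x : Fin (m + 1) → α) (k.succAbove j)

theorem norm_fin_cons {α : Type*} [SeminormedAddCommGroup α] {m : ℕ} (t : α) (x : Fin m → α) :
    ‖(Fin.cons t x : Fin (m + 1) → α)‖ = max ‖t‖ ‖x‖ := by
  simpa using norm_fin_insertNth 0 t x

theorem IsUltrametricDist.max_norm_add_eq_of_norm_le {S : Type*} [SeminormedAddCommGroup S]
    [IsUltrametricDist S] {a b : S} {r : ℝ} (hb : ‖b‖ ≤ r) : max ‖a + b‖ r = max ‖a‖ r := by
  refine le_antisymm (max_le ?_ (le_max_right _ _)) (max_le ?_ (le_max_right _ _))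
  · exact (norm_add_le_max a b).trans (max_le_max le_rfl hb)
  · calc ‖a‖ = ‖(a + b) + -b‖ := by rw [add_neg_cancel_right]
      _ ≤ max ‖a + b‖ ‖b‖ := by simpa using norm_add_le_max (a + b) (-b)
      _ ≤ max ‖a + b‖ r := max_le_max le_rfl hb

section SupOrthonormal

variable (K : Type*) {E ι : Type*} [NormedField K] [SeminormedAddCommGroup E] [NormedSpace K E]
  [Fintype ι]

def SupOrthonormal (b : ι → E) : Prop :=
  ∀ x : ι → K, ‖∑ i, x i • b i‖ = ‖x‖

variable {K}

theorem SupOrthonormal.linearIndependent {b : ι → E} (hb : SupOrthonormal K b) :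
    LinearIndependent K b :=
  Fintype.linearIndependent_iff.2 fun x hx => by
    have := hb x
    rw [hx, norm_zero, eq_comm, norm_eq_zero] at this
    simp [this]

variable {m : ℕ}

theorem supOrthonormal_cons_iff {v : E} {f : Fin m → E} :
    SupOrthonormal K (Fin.cons v f : Fin (m + 1) → E) ↔
      ∀ (t : K) (x : Fin m → K), ‖t • v + ∑ j, x j • f j‖ = max ‖t‖ ‖x‖ := by
  refine ⟨fun h t x => ?_, fun h x => ?_⟩
  · simpa [Fin.sum_univ_succ, norm_fin_cons] using h (Fin.cons t x)
  · rw [← Fin.cons_self_tail x, norm_fin_cons, ← h]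
    simp [Fin.sum_univ_succ, Fin.tail]

theorem supOrthonormal_cons_single (k : Fin (m + 1)) :
    SupOrthonormal K (Fin.cons (Pi.single k 1) fun j => Pi.single (k.succAbove j) 1 :
      Fin (m + 1) → Fin (m + 1) → K) := by
  refine supOrthonormal_cons_iff.2 fun t x => ?_
  have : t • Pi.single k 1 + ∑ j, x j • Pi.single (k.succAbove j) 1 = k.insertNth t x := by
    ext i
    cases i using Fin.succAboveCases k with
    | x => simp
    | p j => simp [Pi.single_apply]
  rw [this, norm_fin_insertNth]

theorem SupOrthonormal.cons_comp {p : ℕ} {v : E} {f : Fin m → E}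
    (hf : SupOrthonormal K (Fin.cons v f : Fin (m + 1) → E)) {e : Fin p → Fin m → K}
    (he : SupOrthonormal K e) :
    SupOrthonormal K (Fin.cons v fun i => ∑ l, e i l • f l : Fin (p + 1) → E) := by
  refine supOrthonormal_cons_iff.2 fun t y => ?_
  have : ∑ i, y i • ∑ l, e i l • f l = ∑ l, (∑ i, y i • e i) l • f l := by
    simp only [Finset.smul_sum, smul_smul, Finset.sum_apply, Pi.smul_apply, smul_eq_mul,
      Finset.sum_smul]
    exact Finset.sum_comm
  rw [this, supOrthonormal_cons_iff.1 hf, he]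

variable [IsUltrametricDist K]

theorem SupOrthonormal.cons_add_sum {u : E} {f : Fin m → E}
    (hf : SupOrthonormal K (Fin.cons u f : Fin (m + 1) → E)) {d : Fin m → K} (hd : ‖d‖ ≤ 1) :
    SupOrthonormal K (Fin.cons (u + ∑ j, d j • f j) f : Fin (m + 1) → E) := by
  refine supOrthonormal_cons_iff.2 fun t x => ?_
  have : t • (u + ∑ j, d j • f j) + ∑ j, x j • f j = t • u + ∑ j, (x + t • d) j • f j := by
    simp only [smul_add, Finset.smul_sum, smul_smul, Pi.add_apply, Pi.smul_apply, smul_eq_mul,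
      add_smul, Finset.sum_add_distrib]
    abel
  have htd : ‖t • d‖ ≤ ‖t‖ := by
    simpa [norm_smul] using mul_le_mul_of_nonneg_left hd (norm_nonneg t)
  rw [this, supOrthonormal_cons_iff.1 hf, max_comm,
    IsUltrametricDist.max_norm_add_eq_of_norm_le htd, max_comm]

theorem SupOrthonormal.cons_sub_smul {v : E} {f : Fin m → E}
    (hf : SupOrthonormal K (Fin.cons v f : Fin (m + 1) → E)) {c : Fin m → K}
    (hc : ∀ j, ‖c j‖ ≤ 1) :
    SupOrthonormal K (Fin.cons v fun j => f j - c j • v : Fin (m + 1) → E) := by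
  refine supOrthonormal_cons_iff.2 fun t x => ?_
  have : t • v + ∑ j, x j • (f j - c j • v) = (t + -∑ j, x j * c j) • v + ∑ j, x j • f j := by
    simp only [smul_sub, smul_smul, Finset.sum_sub_distrib, add_smul, neg_smul, Finset.sum_smul]
    abel
  have hxc : ‖-∑ j, x j * c j‖ ≤ ‖x‖ := by
    rw [norm_neg]
    refine IsUltrametricDist.norm_sum_le_of_forall_le_of_nonneg (norm_nonneg x) fun j _ => ?_
    rw [norm_mul]
    exact (mul_le_of_le_one_right (norm_nonneg _) (hc j)).trans (norm_le_pi_norm x j)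
  rw [this, supOrthonormal_cons_iff.1 hf, IsUltrametricDist.max_norm_add_eq_of_norm_le hxc]

end SupOrthonormal

namespace LinearMap.BilinForm

variable {K : Type*} [NormedField K] [IsUltrametricDist K]

theorem norm_apply_le_max_of_isSymm {E : Type*} [AddCommGroup E] [Module K E]
    (h2 : ‖(2 : K)‖ = 1) {B : LinearMap.BilinForm K E} (hB : B.IsSymm) (x y : E) :
    ‖B x y‖ ≤ max ‖B (x + y) (x + y)‖ ‖B (x - y) (x - y)‖ := by
  have hpolar : B (x + y) (x + y) + -B (x - y) (x - y) = (2 * 2) * B x y := by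
    simp only [map_add, map_sub, LinearMap.add_apply, LinearMap.sub_apply, hB.eq y x]
    ring
  calc ‖B x y‖ = ‖(2 * 2) * B x y‖ := by rw [norm_mul, norm_mul, h2, one_mul, one_mul]
    _ = ‖B (x + y) (x + y) + -B (x - y) (x - y)‖ := by rw [hpolar]
    _ ≤ max ‖B (x + y) (x + y)‖ ‖B (x - y) (x - y)‖ :=
      (IsUltrametricDist.norm_add_le_max _ _).trans_eq (by rw [norm_neg])

variable {ι : Type*} [Fintype ι] [DecidableEq ι]

theorem norm_apply_le_of_forall_single_le (B : LinearMap.BilinForm K (ι → K)) {M : ℝ}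
    (hM0 : 0 ≤ M) (hM : ∀ i j, ‖B (Pi.single i 1) (Pi.single j 1)‖ ≤ M) {x y : ι → K} (hx : ‖x‖ ≤ 1)
    (hy : ‖y‖ ≤ 1) : ‖B x y‖ ≤ M := by
  rw [← Matrix.toBilin'_toMatrix' B, Matrix.toBilin'_apply]
  refine IsUltrametricDist.norm_sum_le_of_forall_le_of_nonneg hM0 fun i _ =>
    IsUltrametricDist.norm_sum_le_of_forall_le_of_nonneg hM0 fun j _ => ?_
  rw [norm_mul, norm_mul, toMatrix'_apply]
  calc ‖x i‖ * ‖B (Pi.single i 1) (Pi.single j 1)‖ * ‖y j‖ ≤ 1 * M * 1 := by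
        gcongr
        exacts [(norm_le_pi_norm x i).trans hx, hM i j, (norm_le_pi_norm y j).trans hy]
    _ = M := by ring

theorem exists_norm_apply_le_norm_apply_self [Nonempty ι] (h2 : ‖(2 : K)‖ = 1)
    {B : LinearMap.BilinForm K (ι → K)} (hB : B.IsSymm) :
    ∃ v : ι → K, ∃ k, v k = 1 ∧ ‖v‖ ≤ 1 ∧
      ∀ x y : ι → K, ‖x‖ ≤ 1 → ‖y‖ ≤ 1 → ‖B x y‖ ≤ ‖B v v‖ := by
  obtain ⟨⟨i, j⟩, hmax⟩ :=
    Finite.exists_max fun p : ι × ι => ‖B (Pi.single p.1 1) (Pi.single p.2 1)‖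
  suffices ∃ v : ι → K, ∃ k, v k = 1 ∧ ‖v‖ ≤ 1 ∧ ‖B (Pi.single i 1) (Pi.single j 1)‖ ≤ ‖B v v‖ by
    obtain ⟨v, k, hvk, hv, hM⟩ := this
    exact ⟨v, k, hvk, hv, fun x y hx hy =>
      (B.norm_apply_le_of_forall_single_le (norm_nonneg _) (fun a b => hmax (a, b)) hx hy).trans hM⟩
  have hsingle : ∀ a, ‖(Pi.single a 1 : ι → K)‖ ≤ 1 := by simp [Pi.norm_single]
  rcases eq_or_ne i j with rfl | hij
  · exact ⟨Pi.single i 1, i, by simp, hsingle i, le_rfl⟩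
  rcases le_max_iff.1 (norm_apply_le_max_of_isSymm h2 hB (Pi.single i 1) (Pi.single j 1))
    with h | h
  · refine ⟨_, i, by simp [hij], ?_, h⟩
    exact (IsUltrametricDist.norm_add_le_max _ _).trans (max_le (hsingle i) (hsingle j))
  · refine ⟨_, i, by simp [hij], ?_, h⟩
    simpa [sub_eq_add_neg] using
      (IsUltrametricDist.norm_add_le_max _ _).trans (max_le (hsingle i) (by simpa using hsingle j))

variable {m : ℕ}

theorem exists_supOrthonormal_cons_orthogonal (h2 : ‖(2 : K)‖ = 1)
    {B : LinearMap.BilinForm K (Fin (m + 1) → K)} (hB : B.IsSymm) :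
    ∃ (v : Fin (m + 1) → K) (f : Fin m → Fin (m + 1) → K),
      SupOrthonormal K (Fin.cons v f : Fin (m + 1) → Fin (m + 1) → K) ∧ ∀ j, B v (f j) = 0 := by
  obtain ⟨v, k, hvk, hv, hmax⟩ := exists_norm_apply_le_norm_apply_self h2 hB
  have hsingle : ∀ a, ‖(Pi.single a 1 : Fin (m + 1) → K)‖ ≤ 1 := by simp [Pi.norm_single]
  have hv_eq : Pi.single k 1 + ∑ j, v (k.succAbove j) • Pi.single (k.succAbove j) 1 = v := by
    have hsum : ∑ i, v i • (Pi.single i 1 : Fin (m + 1) → K) = v := by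
      ext; simp [Pi.single_apply]
    conv_rhs => rw [← hsum, Fin.sum_univ_succAbove _ k, hvk, one_smul]
  have hvo : SupOrthonormal K
      (Fin.cons v fun j => Pi.single (k.succAbove j) 1 : Fin (m + 1) → Fin (m + 1) → K) := by
    have hv' : ‖fun j => v (k.succAbove j)‖ ≤ 1 :=
      (pi_norm_le_iff_of_nonneg zero_le_one).2 fun j => (norm_le_pi_norm v _).trans hv
    simpa only [hv_eq] using (supOrthonormal_cons_single k).cons_add_sum hv'
  -- If `B v v = 0`, maximality makes `B` vanish on the unit ball, and `c = 0` as `x / 0 = 0`.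
  let c : Fin m → K := fun j => B (Pi.single (k.succAbove j) 1) v / B v v
  refine ⟨v, fun j => Pi.single (k.succAbove j) 1 - c j • v, hvo.cons_sub_smul fun j => ?_,
    fun j => ?_⟩
  · rw [norm_div]
    exact div_le_one_of_le₀ (hmax _ _ (hsingle _) hv) (norm_nonneg _)
  · rw [map_sub, map_smul, smul_eq_mul, hB.eq v]
    by_cases h0 : B v v = 0
    · have : ‖B (Pi.single (k.succAbove j) 1) v‖ ≤ 0 := by
        simpa [h0] using hmax _ _ (hsingle _) hv
      simp [h0, norm_le_zero_iff.1 this]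
    · simp [c, div_mul_cancel₀ _ h0]

theorem exists_supOrthonormal_orthogonal (h2 : ‖(2 : K)‖ = 1) :
    ∀ {m : ℕ} {B : LinearMap.BilinForm K (Fin m → K)}, B.IsSymm →
      ∃ e : Fin m → Fin m → K, SupOrthonormal K e ∧ ∀ i j, i ≠ j → B (e i) (e j) = 0
  | 0, _, _ => ⟨![], fun x => by rw [Subsingleton.elim x 0]; simp, fun i => i.elim0⟩
  | m + 1, B, hB => by
    obtain ⟨v, f, hvf, hBvf⟩ := exists_supOrthonormal_cons_orthogonal h2 hB
    let φ := Fintype.linearCombination K f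
    obtain ⟨e, he, hBe⟩ :=
      exists_supOrthonormal_orthogonal h2 (B := B.compl₁₂ φ φ) ⟨fun x y => hB.eq _ _⟩
    refine ⟨Fin.cons v fun i => ∑ l, e i l • f l, hvf.cons_comp he, fun i j hij => ?_⟩
    have hv : ∀ y : Fin m → K, B v (∑ l, y l • f l) = 0 := by simp [map_sum, hBvf]
    cases i using Fin.cases <;> cases j using Fin.cases
    · exact absurd rfl hij
    · simpa using hv _
    · simpa [hB.eq _ v] using hv _
    · simpa [φ, Fintype.linearCombination_apply] using hBe _ _ fun h => hij (by rw [h])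

end LinearMap.BilinForm

theorem stmt1_general (K : Type*) [NontriviallyNormedField K]
    (hu : ∀ x y : K, ‖x + y‖ ≤ max ‖x‖ ‖y‖) (h2 : ‖(2 : K)‖ = 1)
    (n : ℕ) (q : QuadraticForm K (Fin n → K)) :
    ∃ e : Module.Basis (Fin n) K (Fin n → K),
      (∀ x : Fin n → K, ‖∑ i, x i • e i‖ = ‖x‖) ∧
      (∀ i j, i ≠ j → QuadraticMap.polar q (e i) (e j) = 0) := by
  have : IsUltrametricDist K := .isUltrametricDist_of_forall_norm_add_le_max_norm hu
  obtain ⟨e, he, horth⟩ := LinearMap.BilinForm.exists_supOrthonormal_orthogonal h2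
    (B := QuadraticMap.polarBilin q) ⟨QuadraticMap.polar_comm q⟩
  refine ⟨basisOfLinearIndependentOfCardEqFinrank' e he.linearIndependent (by simp), ?_, ?_⟩
  · rw [coe_basisOfLinearIndependentOfCardEqFinrank']
    exact he
  · simpa using horth

/-- Over a non-archimedean local field of residual characteristic not 2, every quadratic
form on `Kⁿ` with nondegenerate polar bilinear form admits an orthogonal basis whose base
change preserves the sup norm. -/
theorem stmt1 (K : Type*) [NontriviallyNormedField K] [LocallyCompactSpace K]
    (hu : ∀ x y : K, ‖x + y‖ ≤ max ‖x‖ ‖y‖) (h2 : ‖(2 : K)‖ = 1)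
    (n : ℕ) (q : QuadraticForm K (Fin n → K))
    (hq : LinearMap.BilinForm.Nondegenerate (QuadraticMap.polarBilin q)) :
    ∃ e : Module.Basis (Fin n) K (Fin n → K),
      (∀ x : Fin n → K, ‖∑ i, x i • e i‖ = ‖x‖) ∧
      (∀ i j, i ≠ j → QuadraticMap.polar q (e i) (e j) = 0) :=
  stmt1_general K hu h2 n q
end

section
/- Let K be a normed field whose norm is ultrametric and which satisfies ‖(2:K)‖ = 1. Let B be a symmetric bilinear form on Kⁿ and let v ∈ Kⁿ with ‖v‖ ≤ 1 (sup norm) be such that ‖B(x,x)‖ ≤ ‖B(v,v)‖ for all x ∈ Kⁿ with ‖x‖ ≤ 1. Then ‖B(v,x)‖ ≤ ‖B(v,v)‖ for all x ∈ Kⁿ with ‖x‖ ≤ 1. -/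
/-- Over an ultrametric normed field with `‖2‖ = 1`, a vector of the unit ball maximizing
`‖B(x,x)‖` on the unit ball is almost orthogonal to the whole unit ball: `‖B(v,x)‖ ≤ ‖B(v,v)‖`
for all `x` in the unit ball. -/
theorem stmt2 (K : Type*) [NormedField K]
    (hu : ∀ x y : K, ‖x + y‖ ≤ max ‖x‖ ‖y‖) (h2 : ‖(2 : K)‖ = 1)
    (n : ℕ) (B : LinearMap.BilinForm K (Fin n → K))
    (hsymm : ∀ x y : Fin n → K, B x y = B y x)
    (v : Fin n → K) (hv : ‖v‖ ≤ 1)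
    (hmax : ∀ x : Fin n → K, ‖x‖ ≤ 1 → ‖B x x‖ ≤ ‖B v v‖) :
    ∀ x : Fin n → K, ‖x‖ ≤ 1 → ‖B v x‖ ≤ ‖B v v‖ := by
  intro x hx
  by_contra hlt
  push_neg at hlt
  have hvx : ‖v + x‖ ≤ 1 := by
    refine (pi_norm_le_iff_of_nonneg zero_le_one).2 fun i => ?_
    calc ‖(v + x) i‖ = ‖v i + x i‖ := rfl
      _ ≤ max ‖v i‖ ‖x i‖ := hu _ _
      _ ≤ 1 := max_le ((norm_le_pi_norm v i).trans hv) ((norm_le_pi_norm x i).trans hx)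
  have hexp : B (v + x) (v + x) = 2 * B v x + (B v v + B x x) := by
    simp only [map_add, LinearMap.add_apply]
    rw [hsymm x v]; ring
  have h2vx : ‖2 * B v x‖ = ‖B v x‖ := by rw [norm_mul, h2, one_mul]
  have hsmall : ‖B v v + B x x‖ < ‖2 * B v x‖ := by
    rw [h2vx]
    exact lt_of_le_of_lt (hu _ _) (max_lt hlt (lt_of_le_of_lt (hmax x hx) hlt))
  have hkey : ‖B (v + x) (v + x)‖ = ‖B v x‖ := by
    rw [hexp, ← h2vx]
    apply le_antisymm
    · exact (hu _ _).trans (max_le le_rfl hsmall.le)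
    · by_contra hc
      push_neg at hc
      have : ‖(2 * B v x)‖ = ‖(2 * B v x + (B v v + B x x)) + -(B v v + B x x)‖ := by ring_nf
      rw [this] at hc
      have := (hu (2 * B v x + (B v v + B x x)) (-(B v v + B x x))).trans_lt
        (max_lt hc (by rw [norm_neg]; exact hsmall.trans_le this.le))
      exact lt_irrefl _ this
  exact absurd (hmax _ hvx) (by rw [hkey]; exact not_le.2 hlt)
end

section
/- Let R be a commutative local ring and let v : Fin (n+1) → R be a vector in the free module R^(n+1) such that v i is a unit of R for some index i. Then there exists an R-basis b of R^(n+1) = (Fin (n+1) → R) with b 0 = v; that is, v can be completed to a basis of the free module R^(n+1). -/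
/-!
The matrix obtained from the identity by replacing its `i`-th column with `v` has determinant
`v i`, so it is invertible as soon as `v i` is a unit; its columns then form a basis containing `v`.
-/

namespace Matrix

variable {ι R : Type*} [Fintype ι] [DecidableEq ι] [CommRing R]

theorem det_one_updateCol (i : ι) (v : ι → R) : ((1 : Matrix ι ι R).updateCol i v).det = v i := by
  have h := congrFun (LinearMap.congr_fun (cramer_one (n := ι) (α := R)) v) i
  rwa [cramer_apply] at h

noncomputable def colBasis (M : Matrix ι ι R) (hM : Invertible M) : Module.Basis ι R (ι → R) :=
  (Pi.basisFun R ι).map (M.toLinearEquiv' hM)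

@[simp]
theorem colBasis_apply (M : Matrix ι ι R) (hM : Invertible M) (j : ι) :
    M.colBasis hM j = M.col j := by
  simp only [colBasis, Module.Basis.map_apply, Pi.basisFun_apply]
  exact M.mulVec_single_one j

end Matrix

theorem exists_basis_apply_eq_of_isUnit {ι R : Type*} [Fintype ι] [DecidableEq ι] [CommRing R]
    (v : ι → R) {i : ι} (hi : IsUnit (v i)) :
    ∃ b : Module.Basis ι R (ι → R), b i = v := by
  set M := (1 : Matrix ι ι R).updateCol i v
  have hM : IsUnit M.det := (Matrix.det_one_updateCol i v).symm ▸ hi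
  refine ⟨M.colBasis (M.invertibleOfIsUnitDet hM), ?_⟩
  ext k
  simp [M]

theorem stmt4_general (R : Type*) [CommRing R] (n : ℕ)
    (v : Fin (n + 1) → R) (hv : ∃ i, IsUnit (v i)) :
    ∃ b : Module.Basis (Fin (n + 1)) R (Fin (n + 1) → R), b 0 = v := by
  obtain ⟨i, hi⟩ := hv
  obtain ⟨b, hb⟩ := exists_basis_apply_eq_of_isUnit v hi
  exact ⟨b.reindex (Equiv.swap 0 i), by simpa using hb⟩

/-- Over a commutative local ring `R`, every vector of `R^(n+1)` having a unit coordinate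
(a primitive vector) can be completed to a basis of the free module `R^(n+1)`. -/
theorem stmt4 (R : Type*) [CommRing R] [IsLocalRing R] (n : ℕ)
    (v : Fin (n + 1) → R) (hv : ∃ i, IsUnit (v i)) :
    ∃ b : Module.Basis (Fin (n + 1)) R (Fin (n + 1) → R), b 0 = v :=
  stmt4_general R n v hv
end

section
/- Let K be a nontrivially normed field which is locally compact and whose norm is ultrametric (a non-archimedean local field). Let N₁ and N₂ be two ultrametric norms on Kⁿ. Then there exists a K-basis (e_i) of Kⁿ and positive real numbers α_i > 0 and β_i > 0 (i ∈ Fin n) such that, writing every x ∈ Kⁿ as x = ∑ i, c i • e i, one has N₁(x) = max_i (α i · ‖c i‖) and N₂(x) = max_i (β i · ‖c i‖). In other words, any two ultrametric norms on Kⁿ are simultaneously diagonal with respect to some common basis. -/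
/-!
Call a family `(bᵢ)` `N`-orthogonal if `N (∑ cᵢ • bᵢ) = maxᵢ N bᵢ * ‖cᵢ‖`. Local compactness
makes every vector have a best approximation in a subspace, so Gram–Schmidt produces
`N`-orthogonal bases. For two norms, induct on the dimension of a subspace `H`: pick `v ∈ H`
maximizing `N₂ / N₁` (compactness of a shell). In an `N₂`-orthogonal basis of `H`, dropping the
basis vector that carries the dominant term of `v` leaves a hyperplane `W` to which `v` is
`N₂`-orthogonal, and the maximality of `N₂ v / N₁ v` makes `v` `N₁`-orthogonal to `W` as well.
A common orthogonal basis of `W`, extended by `v`, is one of `H`.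
-/

section

open Module Submodule Set

variable {K V : Type*}

variable (K) in
structure IsUltrametricNorm [NormedField K] [AddCommGroup V] [Module K V]
    (N : V → ℝ) : Prop where
  eq_zero_iff : ∀ x, N x = 0 ↔ x = 0
  map_smul : ∀ (c : K) x, N (c • x) = ‖c‖ * N x
  isNonarchimedean : IsNonarchimedean N

variable (K) in
def IsNormOrthogonal [NormedField K] [AddCommGroup V] [Module K V] (N : V → ℝ)
    {ι : Type*} [Fintype ι] (b : ι → V) : Prop :=
  ∀ c : ι → K, N (∑ i, c i • b i) = ⨆ i, N (b i) * ‖c i‖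

namespace IsUltrametricNorm

section Algebraic

variable [NormedField K] [AddCommGroup V] [Module K V] {N : V → ℝ}

theorem map_zero (hN : IsUltrametricNorm K N) : N 0 = 0 :=
  (hN.eq_zero_iff 0).2 rfl

theorem map_neg (hN : IsUltrametricNorm K N) (x : V) : N (-x) = N x := by
  rw [← neg_one_smul K x, hN.map_smul, norm_neg, norm_one, one_mul]

theorem nonneg (hN : IsUltrametricNorm K N) (x : V) : 0 ≤ N x := by
  simpa [hN.map_zero, hN.map_neg] using hN.isNonarchimedean x (-x)

theorem pos (hN : IsUltrametricNorm K N) {x : V} (hx : x ≠ 0) : 0 < N x :=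
  (hN.nonneg x).lt_of_ne fun h => hx ((hN.eq_zero_iff x).1 h.symm)

theorem map_sum_le_iSup (hN : IsUltrametricNorm K N) {ι : Type*} [Fintype ι] (f : ι → V) :
    N (∑ i, f i) ≤ ⨆ i, N (f i) := by
  cases isEmpty_or_nonempty ι
  · simp [hN.map_zero]
  · obtain ⟨i, -, hi⟩ := hN.isNonarchimedean.finset_image_add_of_nonempty f Finset.univ_nonempty
    exact hi.trans (le_ciSup (Finite.bddAbove_range fun i => N (f i)) i)

theorem max_le_map_add_smul (hN : IsUltrametricNorm K N) {W : Submodule K V} {e : V}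
    (he : ∀ w ∈ W, N e ≤ N (e + w)) {w : V} (hw : w ∈ W) (c : K) :
    max (N w) (‖c‖ * N e) ≤ N (w + c • e) := by
  have hce : ‖c‖ * N e ≤ N (w + c • e) := by
    rcases eq_or_ne c 0 with rfl | hc
    · simpa using hN.nonneg w
    · rw [show w + c • e = c • (e + c⁻¹ • w) by
        rw [smul_add, smul_inv_smul₀ hc, add_comm], hN.map_smul]
      exact mul_le_mul_of_nonneg_left (he _ (W.smul_mem _ hw)) (norm_nonneg c)
  refine max_le ?_ hce
  calc N w = N (w + c • e + -(c • e)) := by rw [add_neg_cancel_right]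
    _ ≤ max (N (w + c • e)) (N (-(c • e))) := hN.isNonarchimedean _ _
    _ = N (w + c • e) := by rw [hN.map_neg, hN.map_smul, max_eq_left hce]

end Algebraic

end IsUltrametricNorm

section Orthogonal

variable [NormedField K] [AddCommGroup V] [Module K V] {N : V → ℝ}

theorem isNormOrthogonal_iff (hN : IsUltrametricNorm K N) {ι : Type*} [Fintype ι]
    {b : ι → V} :
    IsNormOrthogonal K N b ↔ ∀ (c : ι → K) i, N (b i) * ‖c i‖ ≤ N (∑ j, c j • b j) := by
  refine ⟨fun hb c i => (hb c).ge.trans'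
    (le_ciSup (Finite.bddAbove_range fun i => N (b i) * ‖c i‖) i),
    fun hb c => le_antisymm ?_ (Real.iSup_le (hb c) (hN.nonneg _))⟩
  simpa only [hN.map_smul, mul_comm] using hN.map_sum_le_iSup fun i => c i • b i

namespace IsNormOrthogonal

theorem of_isEmpty (hN : IsUltrametricNorm K N) {ι : Type*} [Fintype ι] [IsEmpty ι] (b : ι → V) :
    IsNormOrthogonal K N b := by
  simp [IsNormOrthogonal, hN.map_zero]

theorem snoc (hN : IsUltrametricNorm K N) {m : ℕ} {b : Fin m → V} (hb : IsNormOrthogonal K N b)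
    {e : V} (he : ∀ w ∈ span K (range b), N e ≤ N (e + w)) :
    IsNormOrthogonal K N (Fin.snoc b e) := by
  rw [isNormOrthogonal_iff hN] at hb ⊢
  intro c i
  have hw : ∑ j, c j.castSucc • b j ∈ span K (range b) :=
    sum_mem fun j _ => smul_mem _ _ (subset_span (mem_range_self j))
  have hmax := hN.max_le_map_add_smul he hw (c (Fin.last m))
  simp only [Fin.sum_univ_castSucc, Fin.snoc_castSucc, Fin.snoc_last]
  induction i using Fin.lastCases with
  | last => simpa [mul_comm] using le_of_max_le_right hmax
  | cast j => simpa using (hb (fun j => c j.castSucc) j).trans (le_of_max_le_left hmax)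

theorem linearIndependent (hN : IsUltrametricNorm K N) {ι : Type*} [Fintype ι] {b : ι → V}
    (hb : IsNormOrthogonal K N b) (hb0 : ∀ i, b i ≠ 0) : LinearIndependent K b := by
  rw [Fintype.linearIndependent_iff]
  intro c hc i
  have hle := (isNormOrthogonal_iff hN).1 hb c i
  rw [hc, hN.map_zero] at hle
  exact norm_le_zero_iff.1 <| nonpos_of_mul_nonpos_right hle (hN.pos (hb0 i))

theorem le_map_add_of_mem_span_succAbove (hN : IsUltrametricNorm K N) {m : ℕ}
    {b : Fin (m + 1) → V} (hb : IsNormOrthogonal K N b) {c : Fin (m + 1) → K} {i₀ : Fin (m + 1)}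
    (hi₀ : ∀ i, N (b i) * ‖c i‖ ≤ N (b i₀) * ‖c i₀‖) {w : V}
    (hw : w ∈ span K (range (b ∘ i₀.succAbove))) :
    N (∑ i, c i • b i) ≤ N (∑ i, c i • b i + w) := by
  obtain ⟨d, rfl⟩ := (mem_span_range_iff_exists_fun K).1 hw
  set p : Fin (m + 1) → K := i₀.insertNth 0 d
  have hp : ∑ j, d j • (b ∘ i₀.succAbove) j = ∑ i, p i • b i := by
    simp [p, Fin.sum_univ_succAbove _ i₀]
  have hsum : ∑ i, c i • b i + ∑ i, p i • b i = ∑ i, (c + p) i • b i := by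
    simp only [Pi.add_apply, add_smul, Finset.sum_add_distrib]
  calc N (∑ i, c i • b i) = N (b i₀) * ‖c i₀‖ := (hb c).trans (le_antisymm (ciSup_le hi₀)
        (le_ciSup (Finite.bddAbove_range fun i => N (b i) * ‖c i‖) i₀))
    _ = N (b i₀) * ‖(c + p) i₀‖ := by simp [p]
    _ ≤ N (∑ i, (c + p) i • b i) := (isNormOrthogonal_iff hN).1 hb _ i₀
    _ = N (∑ i, c i • b i + ∑ j, d j • (b ∘ i₀.succAbove) j) := by rw [hp, hsum]

theorem exists_finrank_eq_forall_le_map_add (hN : IsUltrametricNorm K N) {m : ℕ}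
    {b : Fin (m + 1) → V} (hb : IsNormOrthogonal K N b) (hb0 : ∀ i, b i ≠ 0) {v : V}
    (hv : v ∈ span K (range b)) :
    ∃ W ≤ span K (range b), finrank K W = m ∧ ∀ w ∈ W, N v ≤ N (v + w) := by
  obtain ⟨c, rfl⟩ := (mem_span_range_iff_exists_fun K).1 hv
  obtain ⟨i₀, hi₀⟩ := Finite.exists_max fun i => N (b i) * ‖c i‖
  refine ⟨span K (range (b ∘ i₀.succAbove)), span_mono (range_comp_subset_range _ _), ?_,
    fun w hw => hb.le_map_add_of_mem_span_succAbove hN hi₀ hw⟩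
  rw [finrank_span_eq_card ((hb.linearIndependent hN hb0).comp _ Fin.succAbove_right_injective),
    Fintype.card_fin]

end IsNormOrthogonal

end Orthogonal

/-- A type synonym for `V`, so that an ultrametric norm on `V` can serve as its norm without
clashing with the norm of `V`. -/
def Renormed (V : Type*) : Type _ := V

instance [AddCommGroup V] : AddCommGroup (Renormed V) := inferInstanceAs (AddCommGroup V)

instance [Semiring K] [AddCommGroup V] [Module K V] : Module K (Renormed V) :=
  inferInstanceAs (Module K V)

instance [DivisionRing K] [AddCommGroup V] [Module K V] [FiniteDimensional K V] :
    FiniteDimensional K (Renormed V) :=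
  inferInstanceAs (FiniteDimensional K V)

def Renormed.linearEquiv [Semiring K] [AddCommGroup V] [Module K V] : V ≃ₗ[K] Renormed V where
  toFun := id
  invFun := id
  map_add' _ _ := rfl
  map_smul' _ _ := rfl
  left_inv _ := rfl
  right_inv _ := rfl

namespace IsUltrametricNorm

section Analytic

variable [NontriviallyNormedField K] [NormedAddCommGroup V] [NormedSpace K V] {N : V → ℝ}

abbrev toNormedAddCommGroup (hN : IsUltrametricNorm K N) : NormedAddCommGroup (Renormed V) :=
  AddGroupNorm.toNormedAddCommGroup
    { toFun := N
      map_zero' := hN.map_zero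
      add_le' := fun x y => (hN.isNonarchimedean x y).trans
        (max_le_add_of_nonneg (hN.nonneg x) (hN.nonneg y))
      neg' := hN.map_neg
      eq_zero_of_map_eq_zero' := fun x => (hN.eq_zero_iff x).1 }

abbrev toNormedSpace (hN : IsUltrametricNorm K N) :
    letI := hN.toNormedAddCommGroup; NormedSpace K (Renormed V) :=
  letI := hN.toNormedAddCommGroup
  ⟨fun c x => (hN.map_smul c x).le⟩

variable [CompleteSpace K] [FiniteDimensional K V]

theorem continuous (hN : IsUltrametricNorm K N) : Continuous N := by
  let := hN.toNormedAddCommGroup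
  let := hN.toNormedSpace
  let e : V ≃ₗ[K] Renormed V := Renormed.linearEquiv
  exact continuous_norm.comp e.toLinearMap.continuous_of_finiteDimensional

theorem exists_pos_mul_norm_le (hN : IsUltrametricNorm K N) : ∃ c > 0, ∀ x, c * ‖x‖ ≤ N x := by
  let := hN.toNormedAddCommGroup
  let := hN.toNormedSpace
  let e : V ≃ₗ[K] Renormed V := Renormed.linearEquiv
  obtain ⟨C, hC, hbound⟩ := (LinearMap.toContinuousLinearMap e.symm.toLinearMap).bound
  exact ⟨C⁻¹, inv_pos.2 hC, fun x => (inv_mul_le_iff₀ hC).2 (hbound (e x))⟩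

end Analytic

end IsUltrametricNorm

section Compactness

variable [NontriviallyNormedField K] [CompleteSpace K] [NormedAddCommGroup V] [NormedSpace K V]
  [FiniteDimensional K V] [ProperSpace V]

theorem IsUltrametricNorm.exists_isMinOn_add {N : V → ℝ} (hN : IsUltrametricNorm K N)
    (W : Submodule K V) (v : V) : ∃ w₀ ∈ W, IsMinOn (fun w => N (v + w)) W w₀ := by
  obtain ⟨c, hc, hcN⟩ := hN.exists_pos_mul_norm_le
  have hcont : Continuous fun w => N (v + w) := hN.continuous.comp (continuous_const_add v)
  set D := (W : Set V) ∩ {w | N (v + w) ≤ N v}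
  have hDbdd : D ⊆ Metric.closedBall 0 (N v / c) := by
    rintro w ⟨-, hw⟩
    have : N w ≤ N v := calc
      N w = N (v + w + -v) := by rw [add_neg_cancel_comm]
      _ ≤ max (N (v + w)) (N (-v)) := hN.isNonarchimedean _ _
      _ = N v := by rw [hN.map_neg, max_eq_right hw]
    rw [mem_closedBall_zero_iff, le_div_iff₀ hc, mul_comm]
    exact (hcN w).trans this
  have hD : IsCompact D := (isCompact_closedBall 0 _).of_isClosed_subset
    (W.closed_of_finiteDimensional.inter (isClosed_le hcont continuous_const)) hDbdd
  obtain ⟨w₀, hw₀, hmin⟩ := hD.exists_isMinOn ⟨0, W.zero_mem, by simp⟩ hcont.continuousOn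
  refine ⟨w₀, hw₀.1, fun w hw => ?_⟩
  by_cases hwv : N (v + w) ≤ N v
  · exact hmin ⟨hw, hwv⟩
  · exact hw₀.2.trans (le_of_not_ge hwv)

theorem Submodule.exists_forall_mul_le_of_homogeneous {f g : V → ℝ} (hf : Continuous f)
    (hg : Continuous g) (hfs : ∀ (c : K) x, f (c • x) = ‖c‖ * f x)
    (hgs : ∀ (c : K) x, g (c • x) = ‖c‖ * g x) (hgpos : ∀ x ≠ 0, 0 < g x)
    {H : Submodule K V} (hH : H ≠ ⊥) : ∃ v ∈ H, v ≠ 0 ∧ ∀ x ∈ H, f x * g v ≤ f v * g x := by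
  obtain ⟨c, hc⟩ := NormedField.exists_one_lt_norm K
  have hshell : ∀ x : V, x ≠ 0 → ∃ d : K, d ≠ 0 ∧ ‖c‖⁻¹ ≤ ‖d • x‖ ∧ ‖d • x‖ ≤ 1 := fun x hx => by
    obtain ⟨d, hd, hlt, hge, -⟩ := rescale_to_shell hc one_pos hx
    exact ⟨d, hd, by simpa using hge, hlt.le⟩
  set S := (H : Set V) ∩ {x | ‖c‖⁻¹ ≤ ‖x‖ ∧ ‖x‖ ≤ 1}
  have hS0 : ∀ x ∈ S, x ≠ 0 := by
    rintro x ⟨-, hx, -⟩ rfl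
    exact (inv_pos.2 (one_pos.trans hc)).not_ge (by simpa using hx)
  have hS : IsCompact S := (isCompact_closedBall (0 : V) 1).of_isClosed_subset
    (H.closed_of_finiteDimensional.inter ((isClosed_le continuous_const continuous_norm).inter
      (isClosed_le continuous_norm continuous_const))) fun x hx => by simpa using hx.2.2
  obtain ⟨x₀, hx₀H, hx₀⟩ := H.exists_mem_ne_zero_of_ne_bot hH
  obtain ⟨d₀, -, hd₀⟩ := hshell x₀ hx₀
  obtain ⟨v, hvS, hvmax⟩ := hS.exists_isMaxOn ⟨d₀ • x₀, H.smul_mem d₀ hx₀H, hd₀⟩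
    (hf.continuousOn.div hg.continuousOn fun x hx => (hgpos x (hS0 x hx)).ne')
  refine ⟨v, hvS.1, hS0 v hvS, fun x hx => ?_⟩
  rcases eq_or_ne x 0 with rfl | hx0
  · simp [show f 0 = 0 by simpa using hfs 0 0, show g 0 = 0 by simpa using hgs 0 0]
  obtain ⟨d, hd, hdx⟩ := hshell x hx0
  have hratio : f (d • x) / g (d • x) = f x / g x := by
    rw [hfs, hgs, mul_div_mul_left _ _ (norm_ne_zero_iff.2 hd)]
  have hle : f (d • x) / g (d • x) ≤ f v / g v := hvmax ⟨H.smul_mem d hx, hdx⟩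
  rwa [hratio, div_le_div_iff₀ (hgpos x hx0) (hgpos v (hS0 v hvS))] at hle

end Compactness

theorem Submodule.span_insert_add_of_mem [Ring K] [AddCommGroup V] [Module K V] {s : Set V}
    {w : V} (hw : w ∈ span K s) (x : V) : span K (insert (x + w) s) = span K (insert x s) := by
  have hs : ∀ y, s ⊆ span K (insert y s) := fun y => subset_span.trans' (subset_insert y s)
  refine le_antisymm (span_le.2 (insert_subset ?_ (hs x))) (span_le.2 (insert_subset ?_ (hs _)))
  · exact add_mem (subset_span (mem_insert x s)) (span_mono (subset_insert x s) hw)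
  · simpa using sub_mem (subset_span (mem_insert (x + w) s)) (span_mono (subset_insert _ s) hw)

section Orthogonalization

variable [NontriviallyNormedField K] [CompleteSpace K] [NormedAddCommGroup V] [NormedSpace K V]
  [FiniteDimensional K V] [ProperSpace V] {N : V → ℝ}

namespace IsUltrametricNorm

theorem exists_isNormOrthogonal_span_eq (hN : IsUltrametricNorm K N) :
    ∀ {m : ℕ} (f : Fin m → V), LinearIndependent K f → ∃ b : Fin m → V,
      (∀ i, b i ≠ 0) ∧ IsNormOrthogonal K N b ∧ span K (range b) = span K (range f)
  | 0, f, _ => ⟨f, finZeroElim, .of_isEmpty hN f, rfl⟩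
  | m + 1, f, hf => by
    have hrange : range f = insert (f (Fin.last m)) (range (Fin.init f)) := by
      rw [← Fin.range_snoc, Fin.snoc_init_self]
    rw [← Fin.snoc_init_self f, linearIndependent_finSnoc] at hf
    obtain ⟨b, hb0, hb, hbf⟩ := hN.exists_isNormOrthogonal_span_eq (Fin.init f) hf.1
    obtain ⟨w₀, hw₀, hmin⟩ := hN.exists_isMinOn_add (span K (range (Fin.init f))) (f (Fin.last m))
    refine ⟨Fin.snoc b (f (Fin.last m) + w₀), fun i => ?_, hb.snoc hN fun w hw => ?_, ?_⟩
    · induction i using Fin.lastCases with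
      | last =>
        rw [Fin.snoc_last, ← sub_neg_eq_add, sub_ne_zero]
        exact fun h => hf.2 (h ▸ neg_mem hw₀)
      | cast j => simpa using hb0 j
    · rw [hbf] at hw
      rw [add_assoc]
      exact hmin (add_mem hw₀ hw)
    · rw [Fin.range_snoc, span_insert_add_of_mem (hbf ▸ hw₀), hrange, span_insert, span_insert, hbf]

theorem exists_isNormOrthogonal_span_eq_of_finrank_eq (hN : IsUltrametricNorm K N)
    {m : ℕ} (H : Submodule K V) (hH : finrank K H = m) : ∃ b : Fin m → V,
      (∀ i, b i ≠ 0) ∧ IsNormOrthogonal K N b ∧ span K (range b) = H := by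
  let B := finBasisOfFinrankEq K H hH
  obtain ⟨b, hb0, hb, hbB⟩ := hN.exists_isNormOrthogonal_span_eq _
    (B.linearIndependent.map' H.subtype H.ker_subtype)
  refine ⟨b, hb0, hb, ?_⟩
  rw [hbB, range_comp, ← map_span, B.span_eq, Submodule.map_top, range_subtype]

end IsUltrametricNorm

end Orthogonalization

section Simultaneous

variable [NontriviallyNormedField K] [CompleteSpace K] [NormedAddCommGroup V] [NormedSpace K V]
  [FiniteDimensional K V] [ProperSpace V] {N₁ N₂ : V → ℝ}

theorem exists_isNormOrthogonal_isNormOrthogonal (h₁ : IsUltrametricNorm K N₁)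
    (h₂ : IsUltrametricNorm K N₂) : ∀ {m : ℕ} (H : Submodule K V), finrank K H = m →
      ∃ b : Fin m → V, (∀ i, b i ∈ H) ∧ (∀ i, b i ≠ 0) ∧
        IsNormOrthogonal K N₁ b ∧ IsNormOrthogonal K N₂ b
  | 0, _, _ => ⟨finZeroElim, finZeroElim, finZeroElim, .of_isEmpty h₁ _, .of_isEmpty h₂ _⟩
  | m + 1, H, hH => by
    have hH0 : H ≠ ⊥ := by
      rintro rfl
      simp at hH
    obtain ⟨v, hvH, hv0, hvmax⟩ := H.exists_forall_mul_le_of_homogeneous h₂.continuous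
      h₁.continuous h₂.map_smul h₁.map_smul (fun _ => h₁.pos) hH0
    obtain ⟨g, hg0, hg, hgH⟩ := h₂.exists_isNormOrthogonal_span_eq_of_finrank_eq H hH
    obtain ⟨W, hWH, hW, hvW₂⟩ := hg.exists_finrank_eq_forall_le_map_add h₂ hg0 (hgH ▸ hvH)
    have hvW₁ : ∀ w ∈ W, N₁ v ≤ N₁ (v + w) := fun w hw =>
      le_of_mul_le_mul_left ((mul_le_mul_of_nonneg_right (hvW₂ w hw) (h₁.nonneg v)).trans
        (hvmax (v + w) (H.add_mem hvH (hgH ▸ hWH hw)))) (h₂.pos hv0)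
    obtain ⟨b, hbW, hb0, hb₁, hb₂⟩ := exists_isNormOrthogonal_isNormOrthogonal h₁ h₂ W hW
    have hbW' : span K (range b) ≤ W := span_le.2 (range_subset_iff.2 hbW)
    refine ⟨Fin.snoc b v, Fin.lastCases ?_ fun i => ?_, Fin.lastCases ?_ fun i => ?_,
      hb₁.snoc h₁ fun w hw => hvW₁ w (hbW' hw), hb₂.snoc h₂ fun w hw => hvW₂ w (hbW' hw)⟩
    · simpa using hvH
    · simpa using hgH ▸ hWH (hbW i)
    · simpa using hv0
    · simpa using hb0 i

theorem exists_basis_isNormOrthogonal (h₁ : IsUltrametricNorm K N₁) (h₂ : IsUltrametricNorm K N₂)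
    {n : ℕ} (hn : finrank K V = n) :
    ∃ e : Basis (Fin n) K V, IsNormOrthogonal K N₁ e ∧ IsNormOrthogonal K N₂ e := by
  obtain ⟨b, -, hb0, hb₁, hb₂⟩ :=
    exists_isNormOrthogonal_isNormOrthogonal h₁ h₂ ⊤ ((finrank_top K V).trans hn)
  refine ⟨basisOfLinearIndependentOfCardEqFinrank' b (hb₁.linearIndependent h₁ hb0)
    ((Fintype.card_fin n).trans hn.symm), ?_, ?_⟩ <;> simpa

end Simultaneous

end

theorem stmt5_general (K : Type*) [NontriviallyNormedField K] [LocallyCompactSpace K]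
    (n : ℕ) (N₁ N₂ : (Fin n → K) → ℝ)
    (hN₁0 : ∀ x, N₁ x = 0 ↔ x = 0)
    (hN₁smul : ∀ (c : K) (x), N₁ (c • x) = ‖c‖ * N₁ x)
    (hN₁add : ∀ x y, N₁ (x + y) ≤ max (N₁ x) (N₁ y))
    (hN₂0 : ∀ x, N₂ x = 0 ↔ x = 0)
    (hN₂smul : ∀ (c : K) (x), N₂ (c • x) = ‖c‖ * N₂ x)
    (hN₂add : ∀ x y, N₂ (x + y) ≤ max (N₂ x) (N₂ y)) :
    ∃ (e : Module.Basis (Fin n) K (Fin n → K)) (α β : Fin n → ℝ),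
      (∀ i, 0 < α i) ∧ (∀ i, 0 < β i) ∧
      (∀ c : Fin n → K, N₁ (∑ i, c i • e i) = ⨆ i, α i * ‖c i‖) ∧
      (∀ c : Fin n → K, N₂ (∑ i, c i • e i) = ⨆ i, β i * ‖c i‖) := by
  have : ProperSpace K := .of_locallyCompactSpace K
  have h₁ : IsUltrametricNorm K N₁ := ⟨hN₁0, hN₁smul, hN₁add⟩
  have h₂ : IsUltrametricNorm K N₂ := ⟨hN₂0, hN₂smul, hN₂add⟩
  obtain ⟨e, he₁, he₂⟩ := exists_basis_isNormOrthogonal h₁ h₂ (Module.finrank_fin_fun K)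
  exact ⟨e, fun i => N₁ (e i), fun i => N₂ (e i), fun i => h₁.pos (e.ne_zero i),
    fun i => h₂.pos (e.ne_zero i), he₁, he₂⟩

/-- Over a non-archimedean local field `K`, any two ultrametric norms on `Kⁿ` can be
simultaneously diagonalized: there is a common basis with respect to which both norms are
of the form `x ↦ max_i (αᵢ * ‖xᵢ‖)`. -/
theorem stmt5 (K : Type*) [NontriviallyNormedField K] [LocallyCompactSpace K]
    (hu : ∀ x y : K, ‖x + y‖ ≤ max ‖x‖ ‖y‖)
    (n : ℕ) (N₁ N₂ : (Fin n → K) → ℝ)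
    (hN₁0 : ∀ x, N₁ x = 0 ↔ x = 0)
    (hN₁smul : ∀ (c : K) (x), N₁ (c • x) = ‖c‖ * N₁ x)
    (hN₁add : ∀ x y, N₁ (x + y) ≤ max (N₁ x) (N₁ y))
    (hN₂0 : ∀ x, N₂ x = 0 ↔ x = 0)
    (hN₂smul : ∀ (c : K) (x), N₂ (c • x) = ‖c‖ * N₂ x)
    (hN₂add : ∀ x y, N₂ (x + y) ≤ max (N₂ x) (N₂ y)) :
    ∃ (e : Module.Basis (Fin n) K (Fin n → K)) (α β : Fin n → ℝ),
      (∀ i, 0 < α i) ∧ (∀ i, 0 < β i) ∧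
      (∀ c : Fin n → K, N₁ (∑ i, c i • e i) = ⨆ i, α i * ‖c i‖) ∧
      (∀ c : Fin n → K, N₂ (∑ i, c i • e i) = ⨆ i, β i * ‖c i‖) :=
  stmt5_general K n N₁ N₂ hN₁0 hN₁smul hN₁add hN₂0 hN₂smul hN₂add
end

section
/- For every n, there exists a compact set K₀ of n×n matrices over ℚ₂, all of which are invertible, such that every symmetric n×n matrix B over ℚ₂ whose determinant is a unit admits a matrix M ∈ K₀ with Mᵀ·B·M diagonal. That is, over ℚ₂ every non-degenerate quadratic form on ℚ₂ⁿ can be put into diagonal form by a base change taken from a fixed compact set of invertible matrices. -/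
open Matrix

/-!
Scale `B` so that its largest entry has norm `1`, say `‖B i j‖ = 1`. The values of the form at
`e i + e j` and `e i - e j` differ by `4 * B i j` (or take `e i` when `i = j`), so by the
ultrametric inequality there is an integral vector `x` with `x i = 1` and `d = xᵀ B x` of norm at
least `‖4‖`. The integral vectors `d • e l - (B x) l • x`, `l ≠ i`, are orthogonal to `x`, and
together with `x` they form a base change of determinant `d ^ (n - 1)`. Splitting off `x` and
inducting on the dimension gives an integral diagonalizing base change whose determinant has norm
at least `‖4‖ ^ n ^ 2`; integral matrices with determinant bounded away from `0` form a compact set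
of invertible matrices.
-/

section Splitting

variable {R ι : Type*} [CommRing R] [Fintype ι] [DecidableEq ι]

/-- Column `l ≠ i` is `d` times the `A`-orthogonal projection of `e l` away from `x`,
where `d = xᵀ A x`. -/
def splittingMatrix (A : Matrix ι ι R) (x : ι → R) (i : ι) : Matrix ι ι R :=
  updateCol ((x ⬝ᵥ A *ᵥ x) • 1 - vecMulVec x (A *ᵥ x)) i x

theorem col_splittingMatrix_self (A : Matrix ι ι R) (x : ι → R) (i : ι) :
    (splittingMatrix A x i).col i = x :=
  funext fun _ => updateCol_self

theorem col_splittingMatrix_of_ne (A : Matrix ι ι R) (x : ι → R) {i l : ι} (hl : l ≠ i) :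
    (splittingMatrix A x i).col l = (x ⬝ᵥ A *ᵥ x) • Pi.single l 1 - (A *ᵥ x) l • x := by
  ext k
  simp [splittingMatrix, hl, Pi.single_apply, one_apply, vecMulVec_apply, mul_comm]

theorem det_updateCol_smul_one (d : R) (x : ι → R) (i : ι) :
    (updateCol (d • 1 : Matrix ι ι R) i x).det = d ^ (Fintype.card ι - 1) * x i := by
  rw [← cramer_apply, cramer_smul, cramer_one]
  simp

theorem det_splittingMatrix (A : Matrix ι ι R) {x : ι → R} {i : ι} (hx : x i = 1) :
    (splittingMatrix A x i).det = (x ⬝ᵥ A *ᵥ x) ^ (Fintype.card ι - 1) := by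
  set w := Function.update (A *ᵥ x) i 0
  -- adding `w l` times column `i` (which is `x`) to each column `l` removes the rank-one part
  have hU : splittingMatrix A x i * (1 + vecMulVec (Pi.single i 1) w)
      = updateCol ((x ⬝ᵥ A *ᵥ x) • 1) i x := by
    rw [Matrix.mul_add, Matrix.mul_one, mul_vecMulVec, mulVec_single_one,
      col_splittingMatrix_self]
    ext k l
    rcases eq_or_ne l i with rfl | hl
    · simp [splittingMatrix, w, vecMulVec_apply]
    · simp [splittingMatrix, w, hl, vecMulVec_apply]
  have hdetU : (1 + vecMulVec (Pi.single i 1) w).det = 1 := by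
    rw [vecMulVec_eq Unit, det_one_add_replicateCol_mul_replicateRow]
    simp [w]
  simpa [hdetU, det_updateCol_smul_one, hx] using congrArg det hU

omit [DecidableEq ι] in
theorem transpose_mul_mul_apply (P A Q : Matrix ι ι R) (k l : ι) :
    (Pᵀ * A * Q) k l = P.col k ⬝ᵥ A *ᵥ Q.col l := by
  simp only [mul_apply, dotProduct, mulVec, col_apply, transpose_apply, Finset.sum_mul,
    Finset.mul_sum]
  rw [Finset.sum_comm]
  exact Finset.sum_congr rfl fun _ _ => Finset.sum_congr rfl fun _ _ => by ring

theorem splittingMatrix_transpose_mul_mul_apply_of_ne {A : Matrix ι ι R} (hA : A.IsSymm)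
    (x : ι → R) {i l : ι} (hl : l ≠ i) :
    ((splittingMatrix A x i)ᵀ * A * splittingMatrix A x i) i l = 0 := by
  have hxA : x ⬝ᵥ A *ᵥ Pi.single l 1 = (A *ᵥ x) l := by
    rw [dotProduct_mulVec, dotProduct_single, mul_one, ← mulVec_transpose, hA.eq]
  rw [transpose_mul_mul_apply, col_splittingMatrix_self, col_splittingMatrix_of_ne A x hl,
    mulVec_sub, mulVec_smul, mulVec_smul, dotProduct_sub, dotProduct_smul, dotProduct_smul, hxA,
    smul_eq_mul, smul_eq_mul, mul_comm, sub_self]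

end Splitting

section Blocks

variable {R : Type*} [CommRing R] {n : ℕ}

theorem det_eq_mul_det_submatrix_succAbove (C : Matrix (Fin (n + 1)) (Fin (n + 1)) R)
    {i : Fin (n + 1)} (hC : ∀ l ≠ i, C i l = 0) :
    C.det = C i i * (C.submatrix i.succAbove i.succAbove).det := by
  rw [det_succ_row C i, Finset.sum_eq_single i (fun l _ hl => by simp [hC l hl]) (by simp)]
  simp [← two_mul]

def finSuccSumEquiv (i : Fin (n + 1)) : Fin (n + 1) ≃ Fin n ⊕ Unit :=
  (finSuccEquiv' i).trans (Equiv.optionEquivSumPUnit (Fin n))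

@[simp]
theorem finSuccSumEquiv_symm_inl (i : Fin (n + 1)) (a : Fin n) :
    (finSuccSumEquiv i).symm (Sum.inl a) = i.succAbove a := by
  simp [finSuccSumEquiv]

@[simp]
theorem finSuccSumEquiv_symm_inr (i : Fin (n + 1)) (u : Unit) :
    (finSuccSumEquiv i).symm (Sum.inr u) = i := by
  simp [finSuccSumEquiv]

def extendAt (i : Fin (n + 1)) (M : Matrix (Fin n) (Fin n) R) :
    Matrix (Fin (n + 1)) (Fin (n + 1)) R :=
  (fromBlocks M 0 0 1).submatrix (finSuccSumEquiv i) (finSuccSumEquiv i)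

theorem det_extendAt (i : Fin (n + 1)) (M : Matrix (Fin n) (Fin n) R) :
    (extendAt i M).det = M.det := by
  rw [extendAt, det_submatrix_equiv_self, det_fromBlocks_zero₂₁, det_one, mul_one]

theorem submatrix_finSuccSumEquiv_symm {C : Matrix (Fin (n + 1)) (Fin (n + 1)) R}
    {i : Fin (n + 1)} (hC : C.IsSymm) (hrow : ∀ l ≠ i, C i l = 0) :
    C.submatrix (finSuccSumEquiv i).symm (finSuccSumEquiv i).symm =
      fromBlocks (C.submatrix i.succAbove i.succAbove) 0 0 (of fun _ _ => C i i) := by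
  ext (a | a) (b | b)
  · simp
  · simpa [hC.apply] using hrow _ (Fin.succAbove_ne i a)
  · simpa using hrow _ (Fin.succAbove_ne i b)
  · simp

theorem isDiag_transpose_extendAt_mul_mul {C : Matrix (Fin (n + 1)) (Fin (n + 1)) R}
    {i : Fin (n + 1)} (hC : C.IsSymm) (hrow : ∀ l ≠ i, C i l = 0) {M : Matrix (Fin n) (Fin n) R}
    (hM : (Mᵀ * C.submatrix i.succAbove i.succAbove * M).IsDiag) :
    ((extendAt i M)ᵀ * C * extendAt i M).IsDiag := by
  have hCe : C = (C.submatrix (finSuccSumEquiv i).symm (finSuccSumEquiv i).symm).submatrix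
      (finSuccSumEquiv i) (finSuccSumEquiv i) := by simp
  rw [hCe, submatrix_finSuccSumEquiv_symm hC hrow, extendAt, transpose_submatrix,
    submatrix_mul_equiv, submatrix_mul_equiv, fromBlocks_transpose, fromBlocks_multiply,
    fromBlocks_multiply]
  refine IsDiag.submatrix ?_ (finSuccSumEquiv i).injective
  simpa [isDiag_fromBlocks_iff] using ⟨hM, isDiag_of_subsingleton _⟩

end Blocks

section NormedField

variable {K ι : Type*} [NormedField K]

theorem norm_single_le_one [DecidableEq ι] (i j : ι) : ‖(Pi.single i 1 : ι → K) j‖ ≤ 1 := by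
  rcases eq_or_ne j i with rfl | h <;> simp [*]

theorem norm_four_pos [NeZero (2 : K)] : 0 < ‖(4 : K)‖ :=
  norm_pos_iff.2 <| by simpa [show (4 : K) = 2 * 2 by norm_num] using two_ne_zero

theorem norm_extendAt_le_one {n : ℕ} {M : Matrix (Fin n) (Fin n) K} (hM : ∀ k l, ‖M k l‖ ≤ 1)
    (i k l : Fin (n + 1)) : ‖extendAt i M k l‖ ≤ 1 := by
  rw [extendAt, submatrix_apply]
  rcases finSuccSumEquiv i k with a | a <;> rcases finSuccSumEquiv i l with b | b <;>
    simp [hM, one_apply]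

theorem exists_normalizing_smul [Fintype ι] {B : Matrix ι ι K} (hB : B ≠ 0) :
    ∃ c : K, c ≠ 0 ∧ (∀ k l, ‖(c • B) k l‖ ≤ 1) ∧ ∃ i j, ‖(c • B) i j‖ = 1 := by
  obtain ⟨i, j, hij⟩ : ∃ i j, B i j ≠ 0 := by
    by_contra! h
    exact hB (Matrix.ext h)
  obtain ⟨⟨a, b⟩, -, hmax⟩ :=
    Finset.univ.exists_max_image (fun p : ι × ι => ‖B p.1 p.2‖) ⟨(i, j), Finset.mem_univ _⟩
  have hab : 0 < ‖B a b‖ := (norm_pos_iff.2 hij).trans_le (hmax (i, j) (Finset.mem_univ _))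
  refine ⟨(B a b)⁻¹, inv_ne_zero (norm_pos_iff.1 hab), fun k l => ?_, a, b, ?_⟩
  · simpa [← div_eq_inv_mul, div_le_one hab] using hmax (k, l) (Finset.mem_univ _)
  · simp [inv_mul_cancel₀ (norm_pos_iff.1 hab)]

theorem isCompact_setOf_norm_le_one_le_norm_det [ProperSpace K] [Fintype ι] [DecidableEq ι]
    (ε : ℝ) : IsCompact {M : Matrix ι ι K | (∀ i j, ‖M i j‖ ≤ 1) ∧ ε ≤ ‖M.det‖} := by
  have hball : IsCompact {M : Matrix ι ι K | ∀ i j, ‖M i j‖ ≤ 1} := by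
    have := isCompact_univ_pi fun _ : ι => isCompact_univ_pi fun _ : ι =>
      isCompact_closedBall (0 : K) 1
    simp only [Set.pi, Set.mem_univ, mem_closedBall_zero_iff, forall_const] at this
    exact this
  exact hball.inter_right (isClosed_le continuous_const continuous_id.matrix_det.norm)

variable [IsUltrametricDist K] [Fintype ι]

theorem norm_dotProduct_le_one {x y : ι → K} (hx : ∀ i, ‖x i‖ ≤ 1) (hy : ∀ i, ‖y i‖ ≤ 1) :
    ‖x ⬝ᵥ y‖ ≤ 1 :=
  IsUltrametricDist.norm_sum_le_of_forall_le_of_nonneg zero_le_one fun i _ => by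
    simpa [norm_mul] using mul_le_one₀ (hx i) (norm_nonneg _) (hy i)

theorem norm_mulVec_le_one {A : Matrix ι ι K} {x : ι → K} (hA : ∀ i j, ‖A i j‖ ≤ 1)
    (hx : ∀ i, ‖x i‖ ≤ 1) (i : ι) : ‖(A *ᵥ x) i‖ ≤ 1 :=
  norm_dotProduct_le_one (hA i) hx

theorem norm_mul_apply_le_one {M N : Matrix ι ι K} (hM : ∀ i j, ‖M i j‖ ≤ 1)
    (hN : ∀ i j, ‖N i j‖ ≤ 1) (i j : ι) : ‖(M * N) i j‖ ≤ 1 :=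
  norm_dotProduct_le_one (hM i) (hN · j)

variable [DecidableEq ι]

theorem exists_norm_dotProduct_mulVec_ge {A : Matrix ι ι K} (hA : A.IsSymm) (i j : ι) :
    ∃ x : ι → K, (∀ k, ‖x k‖ ≤ 1) ∧ x i = 1 ∧ ‖(4 : K)‖ * ‖A i j‖ ≤ ‖x ⬝ᵥ A *ᵥ x‖ := by
  have h4 : ‖(4 : K)‖ ≤ 1 := mod_cast IsUltrametricDist.norm_natCast_le_one K 4
  obtain rfl | hij := eq_or_ne i j
  · refine ⟨Pi.single i 1, norm_single_le_one i, Pi.single_eq_same i 1, ?_⟩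
    simpa [mulVec_single] using mul_le_of_le_one_left (norm_nonneg _) h4
  set u : ι → K := Pi.single i 1 + Pi.single j 1
  set v : ι → K := Pi.single i 1 - Pi.single j 1
  have hpol : u ⬝ᵥ A *ᵥ u - v ⬝ᵥ A *ᵥ v = 4 * A i j := by
    simp only [u, v, mulVec_add, mulVec_sub, dotProduct_add, dotProduct_sub, add_dotProduct,
      sub_dotProduct, mulVec_single_one, single_dotProduct, one_mul, col_apply, hA.apply i j]
    ring
  have hmax : ‖(4 : K)‖ * ‖A i j‖ ≤ max ‖u ⬝ᵥ A *ᵥ u‖ ‖v ⬝ᵥ A *ᵥ v‖ := by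
    rw [← norm_mul, ← hpol, sub_eq_add_neg, ← norm_neg (v ⬝ᵥ _)]
    exact IsUltrametricDist.norm_add_le_max _ _
  have hu : ∀ k, ‖u k‖ ≤ 1 := fun k => (IsUltrametricDist.norm_add_le_max _ _).trans
    (max_le (norm_single_le_one i k) (norm_single_le_one j k))
  have hv : ∀ k, ‖v k‖ ≤ 1 := fun k => by
    simpa [v, sub_eq_add_neg] using (IsUltrametricDist.norm_add_le_max _ _).trans
      (max_le (norm_single_le_one i k) ((norm_neg _).trans_le (norm_single_le_one j k)))
  rcases le_max_iff.1 hmax with h | h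
  · exact ⟨u, hu, by simp [u, hij], h⟩
  · exact ⟨v, hv, by simp [v, hij], h⟩

theorem norm_splittingMatrix_le_one {A : Matrix ι ι K} {x : ι → K} (hA : ∀ k l, ‖A k l‖ ≤ 1)
    (hx : ∀ k, ‖x k‖ ≤ 1) (i k l : ι) : ‖splittingMatrix A x i k l‖ ≤ 1 := by
  have hd : ‖x ⬝ᵥ A *ᵥ x‖ ≤ 1 := norm_dotProduct_le_one hx (norm_mulVec_le_one hA hx)
  rw [splittingMatrix, updateCol_apply]
  split_ifs
  · exact hx k
  rw [Matrix.sub_apply, sub_eq_add_neg, Matrix.smul_apply, one_apply, vecMulVec_apply]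
  refine (IsUltrametricDist.norm_add_le_max _ _).trans (max_le ?_ ?_)
  · split_ifs <;> simp [hd]
  · simpa using mul_le_one₀ (hx k) (norm_nonneg _) (norm_mulVec_le_one hA hx l)

theorem exists_integral_splitting {B : Matrix ι ι K} (hB : B.IsSymm) (hB0 : B ≠ 0) :
    ∃ i, ∃ M : Matrix ι ι K, (∀ k l, ‖M k l‖ ≤ 1) ∧
      ‖(4 : K)‖ ^ (Fintype.card ι - 1) ≤ ‖M.det‖ ∧ ∀ l ≠ i, (Mᵀ * B * M) i l = 0 := by
  obtain ⟨c, hc, hA, i, j, hij⟩ := exists_normalizing_smul hB0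
  obtain ⟨x, hx, hxi, hQ⟩ := exists_norm_dotProduct_mulVec_ge (hB.smul c) i j
  refine ⟨i, splittingMatrix (c • B) x i, norm_splittingMatrix_le_one hA hx i, ?_, fun l hl => ?_⟩
  · rw [hij, mul_one] at hQ
    rw [det_splittingMatrix _ hxi, norm_pow]
    exact pow_le_pow_left₀ (norm_nonneg _) hQ _
  · simpa [Matrix.mul_smul, hc] using splittingMatrix_transpose_mul_mul_apply_of_ne (hB.smul c) x hl

theorem exists_integral_diagonalizing [NeZero (2 : K)] :
    ∀ {n : ℕ} (B : Matrix (Fin n) (Fin n) K), B.IsSymm → B.det ≠ 0 →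
      ∃ M : Matrix (Fin n) (Fin n) K, (∀ i j, ‖M i j‖ ≤ 1) ∧ ‖(4 : K)‖ ^ n ^ 2 ≤ ‖M.det‖ ∧
        (Mᵀ * B * M).IsDiag
  | 0, _, _, _ => ⟨1, fun i => i.elim0, by simp, isDiag_of_subsingleton _⟩
  | n + 1, B, hB, hdet => by
    obtain ⟨i, M₁, hM₁, hdetM₁, hrow⟩ := exists_integral_splitting hB fun h => hdet (by simp [h])
    rw [Fintype.card_fin, Nat.add_sub_cancel] at hdetM₁
    set C := M₁ᵀ * B * M₁
    have hC : C.IsSymm := by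
      simp only [C, IsSymm, transpose_mul, transpose_transpose, hB.eq, Matrix.mul_assoc]
    have hdetC : (C.submatrix i.succAbove i.succAbove).det ≠ 0 := by
      have hM₁0 : M₁.det ≠ 0 := norm_pos_iff.1 ((pow_pos norm_four_pos n).trans_le hdetM₁)
      have : C.det ≠ 0 := by simp [C, hM₁0, hdet]
      exact right_ne_zero_of_mul (det_eq_mul_det_submatrix_succAbove C hrow ▸ this)
    obtain ⟨M₂, hM₂, hdetM₂, hdiag⟩ :=
      exists_integral_diagonalizing _ (hC.submatrix i.succAbove) hdetC
    refine ⟨M₁ * extendAt i M₂, norm_mul_apply_le_one hM₁ (norm_extendAt_le_one hM₂ i), ?_, ?_⟩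
    · have h4 : ‖(4 : K)‖ ≤ 1 := mod_cast IsUltrametricDist.norm_natCast_le_one K 4
      calc ‖(4 : K)‖ ^ (n + 1) ^ 2 ≤ ‖(4 : K)‖ ^ (n + n ^ 2) :=
            pow_le_pow_of_le_one (norm_nonneg _) h4 (by nlinarith)
        _ = ‖(4 : K)‖ ^ n * ‖(4 : K)‖ ^ n ^ 2 := pow_add _ _ _
        _ ≤ ‖(M₁ * extendAt i M₂).det‖ := by
          rw [det_mul, det_extendAt, norm_mul]
          exact mul_le_mul hdetM₁ hdetM₂ (by positivity) (norm_nonneg _)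
    · simpa [C, transpose_mul, Matrix.mul_assoc] using
        isDiag_transpose_extendAt_mul_mul hC hrow hdiag

theorem exists_isCompact_diagonalizing [ProperSpace K] [NeZero (2 : K)] (n : ℕ) :
    ∃ K₀ : Set (Matrix (Fin n) (Fin n) K), IsCompact K₀ ∧ (∀ M ∈ K₀, IsUnit M.det) ∧
      ∀ B : Matrix (Fin n) (Fin n) K, B.IsSymm → IsUnit B.det → ∃ M ∈ K₀, (Mᵀ * B * M).IsDiag := by
  refine ⟨_, isCompact_setOf_norm_le_one_le_norm_det (‖(4 : K)‖ ^ n ^ 2), fun M hM => ?_,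
    fun B hB hdet => ?_⟩
  · exact isUnit_iff_ne_zero.2 (norm_pos_iff.1 ((pow_pos norm_four_pos _).trans_le hM.2))
  · obtain ⟨M, hM, hdetM, hdiag⟩ := exists_integral_diagonalizing B hB hdet.ne_zero
    exact ⟨M, ⟨hM, hdetM⟩, hdiag⟩

end NormedField

/-- Over `ℚ₂` (residual characteristic 2, characteristic 0) there is a fixed compact set of
invertible matrices from which a diagonalizing base change can be taken for every symmetric
matrix with unit determinant. -/
theorem stmt9 (n : ℕ) :
    ∃ K₀ : Set (Matrix (Fin n) (Fin n) ℚ_[2]),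
      IsCompact K₀ ∧ (∀ M ∈ K₀, IsUnit M.det) ∧
      ∀ B : Matrix (Fin n) (Fin n) ℚ_[2], B.IsSymm → IsUnit B.det →
        ∃ M ∈ K₀, (Mᵀ * B * M).IsDiag :=
  exists_isCompact_diagonalizing n
end

section
/- Let N be a group, Z a normal subgroup of N of finite index, and V a real vector space equipped with a linear representation ρ of N such that ρ(z) is the identity for every z ∈ Z. Let f : Z → V satisfy f(z₁z₂) = f(z₁) + f(z₂) for all z₁, z₂ ∈ Z and the equivariance f(n z n⁻¹) = ρ(n)(f(z)) for all n ∈ N, z ∈ Z. Then there exists a function F : N → V such that F(z) = f(z) for all z ∈ Z and F(mn) = F(m) + ρ(m)(F(n)) for all m, n ∈ N; that is, the translation homomorphism f of Z extends to an affine action of N on V whose linear part is ρ. -/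
/-!
Fix a transversal `q ↦ q.out` of `Z` in `N`. For `n : N` and a coset `q`, the element
`n * q.out * (n q).out⁻¹` lies in `Z`, and these correction terms satisfy a cocycle rule in `n`.
Summing `f` of them over the cosets gives, by equivariance of `f`, a 1-cocycle for `ρ` that
equals `[N : Z] • f` on `Z`; dividing by the index yields the extension.
-/

section CosetCorrection

open QuotientGroup

variable {N : Type*} [Group N] (Z : Subgroup N) [Z.Normal]

noncomputable def cosetCorrection (n : N) (q : N ⧸ Z) : N :=
  n * q.out * ((n : N ⧸ Z) * q).out⁻¹

lemma cosetCorrection_mem (n : N) (q : N ⧸ Z) : cosetCorrection Z n q ∈ Z := by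
  rw [cosetCorrection, ← div_eq_mul_inv, ← eq_iff_div_mem, out_eq', mk_mul, out_eq']

lemma cosetCorrection_of_mem {z : N} (hz : z ∈ Z) (q : N ⧸ Z) : cosetCorrection Z z q = z := by
  rw [cosetCorrection, (eq_one_iff z).mpr hz, one_mul, mul_inv_cancel_right]

lemma cosetCorrection_mul (m n : N) (q : N ⧸ Z) :
    cosetCorrection Z (m * n) q =
      m * cosetCorrection Z n q * m⁻¹ * cosetCorrection Z m ((n : N ⧸ Z) * q) := by
  simp only [cosetCorrection, mk_mul, mul_assoc]
  group

section Transfer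

variable [Fintype (N ⧸ Z)] {k V : Type*} [CommSemiring k] [AddCommMonoid V] [Module k V]

noncomputable def transferSum (f : N → V) (n : N) : V :=
  ∑ q : N ⧸ Z, f (cosetCorrection Z n q)

lemma transferSum_of_mem (f : N → V) {z : N} (hz : z ∈ Z) :
    transferSum Z f z = Z.index • f z := by
  simp only [transferSum, cosetCorrection_of_mem Z hz, Finset.sum_const, Finset.card_univ,
    Subgroup.index_eq_card, Nat.card_eq_fintype_card]

lemma transferSum_mul (ρ : Representation k N V) (f : N → V)
    (hfadd : ∀ z₁ ∈ Z, ∀ z₂ ∈ Z, f (z₁ * z₂) = f z₁ + f z₂)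
    (hfequiv : ∀ (n : N), ∀ z ∈ Z, f (n * z * n⁻¹) = ρ n (f z)) (m n : N) :
    transferSum Z f (m * n) = transferSum Z f m + ρ m (transferSum Z f n) := by
  have hterm : ∀ q : N ⧸ Z, f (cosetCorrection Z (m * n) q) =
      ρ m (f (cosetCorrection Z n q)) + f (cosetCorrection Z m ((n : N ⧸ Z) * q)) := fun q => by
    rw [cosetCorrection_mul, hfadd _ (Subgroup.Normal.conj_mem ‹_› _ (cosetCorrection_mem Z n q) m)
      _ (cosetCorrection_mem Z m _), hfequiv m _ (cosetCorrection_mem Z n q)]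
  have hshift : ∑ q : N ⧸ Z, f (cosetCorrection Z m ((n : N ⧸ Z) * q)) = transferSum Z f m :=
    Fintype.sum_equiv (Equiv.mulLeft (n : N ⧸ Z)) _ _ fun _ => rfl
  simp only [transferSum, hterm, Finset.sum_add_distrib, map_sum, hshift]
  exact add_comm _ _

end Transfer

end CosetCorrection

theorem stmt13_general (N : Type*) [Group N] (Z : Subgroup N) [Z.Normal] [Z.FiniteIndex]
    (V : Type*) [AddCommGroup V] [Module ℝ V]
    (ρ : Representation ℝ N V)
    (f : N → V)
    (hfadd : ∀ z₁ ∈ Z, ∀ z₂ ∈ Z, f (z₁ * z₂) = f z₁ + f z₂)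
    (hfequiv : ∀ (n : N), ∀ z ∈ Z, f (n * z * n⁻¹) = ρ n (f z)) :
    ∃ F : N → V, (∀ z ∈ Z, F z = f z) ∧
      ∀ m n : N, F (m * n) = F m + ρ m (F n) := by
  have := Fintype.ofFinite (N ⧸ Z)
  have hindex : (Z.index : ℝ) ≠ 0 := Nat.cast_ne_zero.mpr Subgroup.FiniteIndex.index_ne_zero
  refine ⟨fun n => (Z.index : ℝ)⁻¹ • transferSum Z f n, fun z hz => ?_, fun m n => ?_⟩
  · dsimp only
    rw [transferSum_of_mem Z f hz, ← Nat.cast_smul_eq_nsmul ℝ, inv_smul_smul₀ hindex]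
  · dsimp only
    rw [transferSum_mul Z ρ f hfadd hfequiv, smul_add, map_smul]

/-- Let `Z` be a normal finite-index subgroup of `N`, and `ρ` a real linear representation
of `N` which is trivial on `Z`. Any homomorphism `f` from `Z` to the additive group `V`
which is equivariant for conjugation extends to a 1-cocycle `F : N → V` for `ρ`, i.e. the
translation action of `Z` extends to an affine action of `N` with linear part `ρ`. -/
theorem stmt13 (N : Type*) [Group N] (Z : Subgroup N) [Z.Normal] [Z.FiniteIndex]
    (V : Type*) [AddCommGroup V] [Module ℝ V]
    (ρ : Representation ℝ N V)
    (hρZ : ∀ z ∈ Z, ρ z = LinearMap.id)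
    (f : N → V)
    (hfadd : ∀ z₁ ∈ Z, ∀ z₂ ∈ Z, f (z₁ * z₂) = f z₁ + f z₂)
    (hfequiv : ∀ (n : N), ∀ z ∈ Z, f (n * z * n⁻¹) = ρ n (f z)) :
    ∃ F : N → V, (∀ z ∈ Z, F z = f z) ∧
      ∀ m n : N, F (m * n) = F m + ρ m (F n) :=
  stmt13_general N Z V ρ f hfadd hfequiv
end

section
/- Let n ≥ 1 and 0 ≤ p ≤ n, and let J be the n×n real diagonal matrix whose first p diagonal entries are 1 and whose remaining n−p diagonal entries are −1. Then for every invertible n×n real matrix g there exist real n×n matrices k, a, h such that kᵀ·k = 1 (k is orthogonal), a is diagonal and invertible, hᵀ·J·h = J (h preserves the quadratic form of signature (p, n−p)), and g = k·a·h. -/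
/-!
Put `S = g J gᵀ`. If `k` is orthogonal with `kᵀ S k = diag d` and `sign d = J`, then `a = diag √|d|`
and `h = a⁻¹ kᵀ g` satisfy `g = k a h` and `h J hᵀ = a⁻¹ diag d a⁻¹ = J`, which for `J² = 1` is
equivalent to `hᵀ J h = J`. Such a `k` is an orthonormal eigenbasis of `S` in a suitable order: by
Sylvester's law of inertia, `S` is congruent to `J` and so has exactly as many positive eigenvalues
as `J` has positive entries.
-/

open Matrix QuadraticMap

theorem Real.inv_sqrt_abs_mul_mul_inv_sqrt_abs (x : ℝ) :
    (√|x|)⁻¹ * x * (√|x|)⁻¹ = SignType.sign x := by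
  rw [mul_right_comm, ← mul_inv, Real.mul_self_sqrt (abs_nonneg x), inv_mul_eq_div]
  rcases lt_trichotomy x 0 with hx | rfl | hx
  · rw [abs_of_neg hx, _root_.sign_neg hx, div_neg, div_self hx.ne]
    simp
  · simp
  · rw [abs_of_pos hx, _root_.sign_pos hx, div_self hx.ne']
    simp

theorem sign_eq_of_pos_iff {x e : ℝ} (he : e = 1 ∨ e = -1) (hx : x ≠ 0) (h : 0 < e ↔ 0 < x) :
    SignType.sign x = e := by
  rcases he with rfl | rfl
  · rw [sign_pos (h.1 one_pos)]
    rfl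
  · have hneg : x < 0 := (not_lt.1 fun hpos => absurd (h.2 hpos) (by norm_num)).lt_of_ne hx
    rw [sign_neg hneg]
    rfl

theorem Equiv.Perm.exists_mem_iff_apply_mem_of_ncard_eq {α : Type*} [Finite α] {s t : Set α}
    (h : s.ncard = t.ncard) : ∃ σ : Equiv.Perm α, ∀ x, x ∈ s ↔ σ x ∈ t := by
  classical
  obtain ⟨e⟩ : Nonempty (s ≃ t) := Finite.card_eq.mp h
  obtain ⟨f⟩ : Nonempty (↥sᶜ ≃ ↥tᶜ) := Finite.card_eq.mp <| by
    rw [Nat.card_coe_set_eq, Nat.card_coe_set_eq, Set.ncard_compl, Set.ncard_compl, h]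
  refine ⟨Equiv.subtypeCongr e f, fun x => ?_⟩
  by_cases hx : x ∈ s
  · have : Equiv.subtypeCongr e f x = e ⟨x, hx⟩ := by simp [Equiv.subtypeCongr, hx]
    exact this ▸ iff_of_true hx (e ⟨x, hx⟩).2
  · have : Equiv.subtypeCongr e f x = f ⟨x, hx⟩ := by simp [Equiv.subtypeCongr, hx]
    exact this ▸ iff_of_false hx (f ⟨x, hx⟩).2

section Fintype

variable {ι : Type*} [Fintype ι]

theorem Matrix.mulVec_dotProduct_mulVec_mulVec {κ R : Type*} [Fintype κ] [CommSemiring R]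
    (A : Matrix ι ι R) (M : Matrix ι κ R) (x : κ → R) :
    (M *ᵥ x) ⬝ᵥ (A *ᵥ (M *ᵥ x)) = x ⬝ᵥ ((Mᵀ * A * M) *ᵥ x) := by
  rw [mulVec_mulVec, dotProduct_mulVec, dotProduct_mulVec, ← vecMul_transpose, vecMul_vecMul,
    Matrix.mul_assoc]

variable [DecidableEq ι]

theorem QuadraticMap.weightedSumSquares_eq_dotProduct_diagonal_mulVec {R : Type*}
    [CommSemiring R] (w x : ι → R) : weightedSumSquares R w x = x ⬝ᵥ (diagonal w *ᵥ x) := by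
  simp only [weightedSumSquares_apply, dotProduct, mulVec_diagonal, smul_eq_mul]
  exact Finset.sum_congr rfl fun i _ => by ring

theorem Matrix.ncard_pos_eq_of_transpose_mul_diagonal_mul_eq_diagonal {𝕜 : Type*} [Field 𝕜]
    [LinearOrder 𝕜] [IsStrictOrderedRing 𝕜] {v w : ι → 𝕜} {M : Matrix ι ι 𝕜}
    (hM : IsUnit M.det) (h : Mᵀ * diagonal v * M = diagonal w) :
    {i | 0 < v i}.ncard = {i | 0 < w i}.ncard := by
  let e : IsometryEquiv (weightedSumSquares 𝕜 w) (weightedSumSquares 𝕜 v) :=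
    { toLinearEquiv := M.toLinearEquiv' (M.invertibleOfIsUnitDet hM)
      map_app' := fun x => by
        simp only [weightedSumSquares_eq_dotProduct_diagonal_mulVec, ← h]
        exact mulVec_dotProduct_mulVec_mulVec _ _ x }
  rw [← QuadraticForm.sigPos_weightedSumSquares, ← QuadraticForm.sigPos_weightedSumSquares,
    Equivalent.sigPos_eq ⟨e⟩]

theorem Matrix.transpose_mul_mul_eq_of_mul_mul_transpose_eq {R : Type*} [CommRing R]
    {J h : Matrix ι ι R} (hJ : J * J = 1) (hh : h * J * hᵀ = J) : hᵀ * J * h = J := by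
  have : hᵀ * J * (h * J) = 1 :=
    mul_eq_one_comm.mp (by rw [← Matrix.mul_assoc, hh, hJ])
  calc hᵀ * J * h = hᵀ * J * (h * J) * J := by
        rw [Matrix.mul_assoc _ (h * J), Matrix.mul_assoc h, hJ, Matrix.mul_one]
    _ = J := by rw [this, Matrix.one_mul]

theorem Matrix.diagonal_mul_diagonal_self_eq_one {R : Type*} [Semiring R] {ε : ι → R}
    (hε : ∀ i, ε i * ε i = 1) : diagonal ε * diagonal ε = 1 := by
  rw [diagonal_mul_diagonal, ← diagonal_one]
  exact congrArg diagonal (funext hε)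

namespace Matrix.IsHermitian

variable {S : Matrix ι ι ℝ}

theorem transpose_eigenvectorUnitary_mul_self (hS : S.IsHermitian) :
    (hS.eigenvectorUnitary : Matrix ι ι ℝ)ᵀ * hS.eigenvectorUnitary = 1 := by
  simpa [star_eq_conjTranspose] using Unitary.coe_star_mul_self hS.eigenvectorUnitary

theorem transpose_eigenvectorUnitary_mul_mul (hS : S.IsHermitian) :
    (hS.eigenvectorUnitary : Matrix ι ι ℝ)ᵀ * S * hS.eigenvectorUnitary =
      diagonal hS.eigenvalues := by
  simpa [Unitary.conjStarAlgAut_star_apply, star_eq_conjTranspose, RCLike.ofReal_real_eq_id] using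
    hS.conjStarAlgAut_star_eigenvectorUnitary

theorem exists_orthogonal_transpose_mul_mul_eq_diagonal (hS : S.IsHermitian) {P : Set ι}
    (hP : P.ncard = {i | 0 < hS.eigenvalues i}.ncard) :
    ∃ (k : Matrix ι ι ℝ) (d : ι → ℝ),
      kᵀ * k = 1 ∧ (∀ i, i ∈ P ↔ 0 < d i) ∧ kᵀ * S * k = diagonal d := by
  obtain ⟨σ, hσ⟩ := Equiv.Perm.exists_mem_iff_apply_mem_of_ncard_eq hP
  set U : Matrix ι ι ℝ := ↑hS.eigenvectorUnitary
  have conj_submatrix : ∀ A : Matrix ι ι ℝ,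
      (U.submatrix id σ)ᵀ * A * U.submatrix id σ = (Uᵀ * A * U).submatrix σ σ := fun A => by
    rw [submatrix_mul _ _ _ id _ Function.bijective_id,
      submatrix_mul _ _ _ id _ Function.bijective_id, submatrix_id_id, transpose_submatrix]
  refine ⟨U.submatrix id σ, hS.eigenvalues ∘ σ, ?_, hσ, ?_⟩
  · rw [← Matrix.mul_one (U.submatrix id σ)ᵀ, conj_submatrix, Matrix.mul_one,
      hS.transpose_eigenvectorUnitary_mul_self, submatrix_one_equiv]
  · rw [conj_submatrix, hS.transpose_eigenvectorUnitary_mul_mul, submatrix_diagonal_equiv]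

end Matrix.IsHermitian

theorem Matrix.exists_orthogonal_transpose_mul_mul_eq_diagonal_of_sign {ε : ι → ℝ}
    (hε : ∀ i, ε i = 1 ∨ ε i = -1) {g : Matrix ι ι ℝ} (hg : IsUnit g.det) :
    ∃ (k : Matrix ι ι ℝ) (d : ι → ℝ), kᵀ * k = 1 ∧ (∀ i, SignType.sign (d i) = ε i) ∧
      kᵀ * (g * diagonal ε * gᵀ) * k = diagonal d := by
  have hεε : diagonal ε * diagonal ε = 1 :=
    diagonal_mul_diagonal_self_eq_one fun i => by rcases hε i with h | h <;> simp [h]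
  set S := g * diagonal ε * gᵀ with hS_def
  have hS : S.IsHermitian := by
    simp [IsHermitian, hS_def, conjTranspose_eq_transpose_of_trivial, transpose_mul,
      Matrix.mul_assoc]
  have hSunit : IsUnit S := by
    rw [isUnit_iff_isUnit_det, hS_def, det_mul, det_mul, det_transpose]
    exact (hg.mul ((isUnit_iff_isUnit_det _).mp <|
      IsUnit.of_mul_eq_one _ hεε)).mul hg
  have hinertia : {i | 0 < ε i}.ncard = {i | 0 < hS.eigenvalues i}.ncard := by
    refine ncard_pos_eq_of_transpose_mul_diagonal_mul_eq_diagonal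
      (M := gᵀ * hS.eigenvectorUnitary) ?_ ?_
    · rw [det_mul, det_transpose]
      exact hg.mul <| (isUnit_iff_isUnit_det _).mp <|
        IsUnit.of_mul_eq_one_right _ hS.transpose_eigenvectorUnitary_mul_self
    · rw [← hS.transpose_eigenvectorUnitary_mul_mul]
      simp only [hS_def, transpose_mul, transpose_transpose, Matrix.mul_assoc]
  obtain ⟨k, d, hk, hd, hkSk⟩ := hS.exists_orthogonal_transpose_mul_mul_eq_diagonal hinertia
  have hd0 : ∀ i, d i ≠ 0 := by
    have hunit : IsUnit (diagonal d) :=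
      hkSk ▸ ((IsUnit.of_mul_eq_one _ hk).mul hSunit).mul (IsUnit.of_mul_eq_one_right _ hk)
    exact fun i => ((isUnit_diagonal.mp hunit).map (Pi.evalMonoidHom _ i)).ne_zero
  exact ⟨k, d, hk, fun i => sign_eq_of_pos_iff (hε i) (hd0 i) (hd i), hkSk⟩

theorem Matrix.exists_orthogonal_mul_diagonal_mul_isometry_of_sign {ε : ι → ℝ}
    (hε : ∀ i, ε i = 1 ∨ ε i = -1) {g : Matrix ι ι ℝ} (hg : IsUnit g.det) :
    ∃ k a h : Matrix ι ι ℝ, kᵀ * k = 1 ∧ a.IsDiag ∧ IsUnit a.det ∧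
      hᵀ * diagonal ε * h = diagonal ε ∧ g = k * a * h := by
  obtain ⟨k, d, hk, hsign, hkSk⟩ := exists_orthogonal_transpose_mul_mul_eq_diagonal_of_sign hε hg
  have hd0 : ∀ i, d i ≠ 0 := fun i h0 => by
    rcases hε i with h | h <;> simpa [h0, h] using hsign i
  set r : ι → ℝ := fun i => √|d i|
  have hr : ∀ i, r i ≠ 0 := fun i => (Real.sqrt_pos.2 (abs_pos.2 (hd0 i))).ne'
  refine ⟨k, diagonal r, diagonal r⁻¹ * kᵀ * g, hk, isDiag_diagonal r, ?_, ?_, ?_⟩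
  · rw [det_diagonal]
    exact (Finset.prod_ne_zero_iff.2 fun i _ => hr i).isUnit
  · refine transpose_mul_mul_eq_of_mul_mul_transpose_eq
      (diagonal_mul_diagonal_self_eq_one fun i => by rcases hε i with h | h <;> simp [h]) ?_
    calc diagonal r⁻¹ * kᵀ * g * diagonal ε * (diagonal r⁻¹ * kᵀ * g)ᵀ
        = diagonal r⁻¹ * (kᵀ * (g * diagonal ε * gᵀ) * k) * diagonal r⁻¹ := by
          simp only [transpose_mul, transpose_transpose, diagonal_transpose, Matrix.mul_assoc]
      _ = diagonal ε := by
          rw [hkSk, diagonal_mul_diagonal, diagonal_mul_diagonal]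
          congr 1
          funext i
          rw [← hsign, ← Real.inv_sqrt_abs_mul_mul_inv_sqrt_abs]
          rfl
  · have hrr : diagonal r * diagonal r⁻¹ = 1 := by
      rw [diagonal_mul_diagonal, ← diagonal_one]
      congr 1
      funext i
      exact mul_inv_cancel₀ (hr i)
    calc g = k * kᵀ * g := by rw [mul_eq_one_comm.mp hk, Matrix.one_mul]
      _ = k * (diagonal r * diagonal r⁻¹) * kᵀ * g := by rw [hrr, Matrix.mul_one]
      _ = k * diagonal r * (diagonal r⁻¹ * kᵀ * g) := by simp only [Matrix.mul_assoc]

end Fintype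

theorem stmt14_general (n p : ℕ)
    (J : Matrix (Fin n) (Fin n) ℝ)
    (hJ : J = Matrix.diagonal (fun i : Fin n => if (i : ℕ) < p then (1 : ℝ) else -1))
    (g : Matrix (Fin n) (Fin n) ℝ) (hg : IsUnit g.det) :
    ∃ k a h : Matrix (Fin n) (Fin n) ℝ,
      kᵀ * k = 1 ∧ a.IsDiag ∧ IsUnit a.det ∧ hᵀ * J * h = J ∧ g = k * a * h := by
  subst hJ
  exact exists_orthogonal_mul_diagonal_mul_isometry_of_sign (fun i => by split_ifs <;> simp) hg

/-- Polar decomposition `G = KAH` for the real symmetric space `GL(n,ℝ)/O(p, n-p)`: every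
invertible real matrix `g` factors as `g = k * a * h` with `k` orthogonal, `a` diagonal
invertible, and `h` preserving the quadratic form of signature `(p, n-p)` with Gram
matrix `J`. -/
theorem stmt14 (n p : ℕ) (hn : 1 ≤ n) (hp : p ≤ n)
    (J : Matrix (Fin n) (Fin n) ℝ)
    (hJ : J = Matrix.diagonal (fun i : Fin n => if (i : ℕ) < p then (1 : ℝ) else -1))
    (g : Matrix (Fin n) (Fin n) ℝ) (hg : IsUnit g.det) :
    ∃ k a h : Matrix (Fin n) (Fin n) ℝ,
      kᵀ * k = 1 ∧ a.IsDiag ∧ IsUnit a.det ∧ hᵀ * J * h = J ∧ g = k * a * h :=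
  stmt14_general n p J hJ g hg
end

section
/- Let p be a prime and let G₀ be the set of invertible n×n matrices g over ℚ_p such that every entry of g and every entry of g⁻¹ has norm at most 1 (i.e., G₀ = GLₙ(ℤ_p) inside GLₙ(ℚ_p)). If C is a subgroup of the group of invertible n×n matrices over ℚ_p which contains G₀ and whose underlying set of matrices is compact in the space of n×n matrices over ℚ_p, then C = G₀. In other words, GLₙ(ℤ_p) is a maximal compact subgroup of GLₙ(ℚ_p). -/
open Matrix

section Aux

variable {K : Type*} [Field K] {n : ℕ}

/-- Elimination matrix: `1 + elimMat A i j` clears column `j` of `A` except row `i`. -/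
def elimMat (A : Matrix (Fin n) (Fin n) K) (i j : Fin n) : Matrix (Fin n) (Fin n) K :=
  Matrix.of fun r s => if s = i ∧ r ≠ i then -(A r j / A i j) else 0

lemma elimMat_apply (A : Matrix (Fin n) (Fin n) K) (i j r s : Fin n) :
    elimMat A i j r s = if s = i ∧ r ≠ i then -(A r j / A i j) else 0 := rfl

lemma elimMat_sq (A : Matrix (Fin n) (Fin n) K) (i j : Fin n) :
    elimMat A i j * elimMat A i j = 0 := by
  ext r s
  rw [Matrix.mul_apply]
  apply Finset.sum_eq_zero
  intro t _
  by_cases ht : t = i ∧ r ≠ i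
  · have h2 : ¬ (s = i ∧ t ≠ i) := by
      rintro ⟨-, hne⟩; exact hne ht.1
    simp [elimMat_apply, h2]
  · simp [elimMat_apply, ht]

lemma unit_of_sq_zero {R : Type*} [Ring R] {N : R} (h : N * N = 0) :
    (1 + N) * (1 - N) = 1 := by
  rw [mul_sub, mul_one, add_mul, one_mul, h, add_zero]
  abel

lemma unit_of_sq_zero' {R : Type*} [Ring R] {N : R} (h : N * N = 0) :
    (1 - N) * (1 + N) = 1 := by
  rw [mul_add, mul_one, sub_mul, one_mul, h, sub_zero]
  abel

lemma elim_col (A : Matrix (Fin n) (Fin n) K) (i j : Fin n) (hA : A i j ≠ 0) (r : Fin n) :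
    ((1 + elimMat A i j) * A) r j = if r = i then A i j else 0 := by
  rw [add_mul, one_mul, Matrix.add_apply, Matrix.mul_apply]
  by_cases hr : r = i
  · subst hr
    rw [if_pos rfl]
    have : ∀ t ∈ Finset.univ, elimMat A r j r t * A t j = 0 := by
      intro t _
      have : ¬ (t = r ∧ r ≠ r) := by rintro ⟨-, h⟩; exact h rfl
      simp [elimMat_apply, this]
    rw [Finset.sum_congr rfl this]
    simp
  · rw [if_neg hr]
    rw [Finset.sum_eq_single i]
    · rw [elimMat_apply, if_pos ⟨rfl, hr⟩, neg_mul, div_mul_cancel₀ _ hA]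
      ring
    · intro t _ ht
      have : ¬ (t = i ∧ r ≠ i) := by rintro ⟨h, -⟩; exact ht h
      simp [elimMat_apply, this]
    · intro h; exact absurd (Finset.mem_univ i) h

/-- Permutation matrix for the transposition `(i j)`. -/
def swapMat (i j : Fin n) : Matrix (Fin n) (Fin n) K :=
  Matrix.of fun r s => if r = Equiv.swap i j s then 1 else 0

lemma swapMat_apply (i j r s : Fin n) :
    (swapMat i j : Matrix (Fin n) (Fin n) K) r s = if r = Equiv.swap i j s then 1 else 0 := rfl

lemma mul_swapMat (A : Matrix (Fin n) (Fin n) K) (i j r s : Fin n) :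
    (A * (swapMat i j : Matrix (Fin n) (Fin n) K)) r s = A r (Equiv.swap i j s) := by
  rw [Matrix.mul_apply, Finset.sum_eq_single (Equiv.swap i j s)]
  · rw [swapMat_apply, if_pos rfl, mul_one]
  · intro t _ ht
    rw [swapMat_apply, if_neg ht, mul_zero]
  · intro h; exact absurd (Finset.mem_univ _) h

lemma swapMat_mul_self (i j : Fin n) :
    (swapMat i j : Matrix (Fin n) (Fin n) K) * swapMat i j = 1 := by
  ext r s
  rw [mul_swapMat, swapMat_apply, Equiv.swap_apply_self, Matrix.one_apply]

end Aux

/-- `GLₙ(ℤ_p)` is a maximal compact subgroup of `GLₙ(ℚ_p)`: any subgroup `C` of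
`GL(n, ℚ_p)` containing `G₀ = GLₙ(ℤ_p)` (the elements whose entries and inverse entries all
have norm at most 1) and whose underlying set of matrices is compact equals `G₀`. -/
theorem stmt15 (p : ℕ) [Fact p.Prime] (n : ℕ)
    (C : Subgroup (GL (Fin n) ℚ_[p]))
    (hsub : ∀ g : GL (Fin n) ℚ_[p],
      ((∀ i j, ‖(g : Matrix (Fin n) (Fin n) ℚ_[p]) i j‖ ≤ 1) ∧
       (∀ i j, ‖((g⁻¹ : GL (Fin n) ℚ_[p]) : Matrix (Fin n) (Fin n) ℚ_[p]) i j‖ ≤ 1)) →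
      g ∈ C)
    (hcomp : IsCompact
      ((fun g : GL (Fin n) ℚ_[p] => (g : Matrix (Fin n) (Fin n) ℚ_[p])) '' (C : Set _))) :
    ∀ g : GL (Fin n) ℚ_[p], g ∈ C ↔
      ((∀ i j, ‖(g : Matrix (Fin n) (Fin n) ℚ_[p]) i j‖ ≤ 1) ∧
       (∀ i j, ‖((g⁻¹ : GL (Fin n) ℚ_[p]) : Matrix (Fin n) (Fin n) ℚ_[p]) i j‖ ≤ 1)) := by
  have key : ∀ h : GL (Fin n) ℚ_[p], h ∈ C →
      ∀ i j, ‖(h : Matrix (Fin n) (Fin n) ℚ_[p]) i j‖ ≤ 1 := by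
    by_contra hcon
    push_neg at hcon
    obtain ⟨h, hhC, i0, j0, hgt⟩ := hcon
    set A : Matrix (Fin n) (Fin n) ℚ_[p] := (h : Matrix (Fin n) (Fin n) ℚ_[p]) with hAdef
    obtain ⟨⟨i, j⟩, -, hmax⟩ := Finset.exists_max_image (Finset.univ : Finset (Fin n × Fin n))
      (fun q => ‖A q.1 q.2‖) ⟨(i0, j0), Finset.mem_univ _⟩
    have hμ : 1 < ‖A i j‖ := lt_of_lt_of_le hgt (hmax (i0, j0) (Finset.mem_univ _))
    have hA0 : A i j ≠ 0 := by
      intro e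
      rw [e, norm_zero] at hμ
      linarith
    set N : Matrix (Fin n) (Fin n) ℚ_[p] := elimMat A i j with hNdef
    have hNsq : N * N = 0 := elimMat_sq A i j
    -- Units built from the elimination and swap matrices
    set Lu : GL (Fin n) ℚ_[p] := ⟨1 + N, 1 - N, unit_of_sq_zero hNsq, unit_of_sq_zero' hNsq⟩
      with hLudef
    set Qu : GL (Fin n) ℚ_[p] :=
      ⟨swapMat i j, swapMat i j, swapMat_mul_self i j, swapMat_mul_self i j⟩ with hQudef
    -- Entry bounds
    have hNle : ∀ r s, ‖N r s‖ ≤ 1 := by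
      intro r s
      rw [hNdef, elimMat_apply]
      split_ifs with hc
      · rw [norm_neg, norm_div]
        rw [div_le_one (lt_trans one_pos hμ)]
        exact hmax (r, j) (Finset.mem_univ _)
      · simp
    have honele : ∀ r s : Fin n, ‖(1 : Matrix (Fin n) (Fin n) ℚ_[p]) r s‖ ≤ 1 := by
      intro r s
      rw [Matrix.one_apply]
      split_ifs <;> simp
    have hLple : ∀ r s, ‖(1 + N) r s‖ ≤ 1 := by
      intro r s
      rw [Matrix.add_apply]
      exact le_trans (Padic.nonarchimedean _ _) (max_le (honele r s) (hNle r s))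
    have hLmle : ∀ r s, ‖(1 - N) r s‖ ≤ 1 := by
      intro r s
      rw [Matrix.sub_apply]
      calc ‖(1 : Matrix (Fin n) (Fin n) ℚ_[p]) r s - N r s‖
          ≤ max ‖(1 : Matrix (Fin n) (Fin n) ℚ_[p]) r s‖ ‖N r s‖ := by
            rw [sub_eq_add_neg]
            exact le_trans (Padic.nonarchimedean _ _) (by rw [norm_neg])
        _ ≤ 1 := max_le (honele r s) (hNle r s)
    have hQle : ∀ r s, ‖(swapMat i j : Matrix (Fin n) (Fin n) ℚ_[p]) r s‖ ≤ 1 := by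
      intro r s
      rw [swapMat_apply]
      split_ifs <;> simp
    have hLC : Lu ∈ C := by
      apply hsub
      constructor
      · intro r s; exact hLple r s
      · intro r s
        show ‖(1 - N) r s‖ ≤ 1
        exact hLmle r s
    have hQC : Qu ∈ C := by
      apply hsub
      constructor
      · intro r s; exact hQle r s
      · intro r s
        show ‖(swapMat i j : Matrix (Fin n) (Fin n) ℚ_[p]) r s‖ ≤ 1
        exact hQle r s
    -- The element with a big diagonal entry
    set c : GL (Fin n) ℚ_[p] := Lu * h * Qu with hcdef
    have hcC : c ∈ C := C.mul_mem (C.mul_mem hLC hhC) hQC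
    set B : Matrix (Fin n) (Fin n) ℚ_[p] := (1 + N) * A * swapMat i j with hBdef
    have hcval : (c : Matrix (Fin n) (Fin n) ℚ_[p]) = B := by
      rw [hcdef, hBdef]
      rfl
    have hBcol : ∀ r, B r i = if r = i then A i j else 0 := by
      intro r
      have h1 : B r i = ((1 + N) * A) r (Equiv.swap i j i) := mul_swapMat ((1 + N) * A) i j r i
      rw [Equiv.swap_apply_left] at h1
      rw [h1, hNdef]
      exact elim_col A i j hA0 r
    have hpow : ∀ k : ℕ, (B ^ k) i i = (A i j) ^ k := by
      intro k
      induction k with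
      | zero => simp [Matrix.one_apply]
      | succ k ih =>
        rw [pow_succ, pow_succ, Matrix.mul_apply, Finset.sum_eq_single i]
        · rw [ih, hBcol i, if_pos rfl]
        · intro t _ ht
          rw [hBcol t, if_neg ht, mul_zero]
        · intro hni; exact absurd (Finset.mem_univ i) hni
    -- Boundedness from compactness
    have hf : Continuous fun m : Matrix (Fin n) (Fin n) ℚ_[p] => ‖m i i‖ :=
      ((continuous_apply i).comp (continuous_apply i)).norm
    have hne : ((fun g : GL (Fin n) ℚ_[p] => (g : Matrix (Fin n) (Fin n) ℚ_[p]))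
        '' (C : Set _)).Nonempty := ⟨(1 : GL (Fin n) ℚ_[p]), 1, C.one_mem, rfl⟩
    obtain ⟨m0, hm0, hub⟩ := hcomp.exists_isMaxOn hne hf.continuousOn
    obtain ⟨k, hk⟩ := pow_unbounded_of_one_lt ‖m0 i i‖ hμ
    have hmem : B ^ k ∈ ((fun g : GL (Fin n) ℚ_[p] => (g : Matrix (Fin n) (Fin n) ℚ_[p]))
        '' (C : Set _)) := by
      refine ⟨c ^ k, pow_mem hcC k, ?_⟩
      show ((c ^ k : GL (Fin n) ℚ_[p]) : Matrix (Fin n) (Fin n) ℚ_[p]) = B ^ k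
      rw [Units.val_pow_eq_pow_val, hcval]
    have hle := hub hmem
    simp only [Set.mem_setOf_eq] at hle
    rw [hpow k, norm_pow] at hle
    linarith
  intro g
  constructor
  · intro hg
    exact ⟨key g hg, key g⁻¹ (C.inv_mem hg)⟩
  · exact hsub g
end
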